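/- arXiv:1205.6586 — 9 statements merged into one kernel-verified Lean document; each statement's English description precedes it below -/
import Mathlib

section
/- Let a be an integer with a > 1, and let c, ℓ be integers with 1 ≤ ℓ < c. Then C(ca-1, a-1) * C(c, ℓ) ≤ C(ca, ℓa), where C(n,k) denotes the binomial coefficient. -/
/-- `n * C(n*a - 1, a - 1) = C(n*a, a)` for `0 < a`, `0 < n`. -/
lemma aux_mul_choose_pred (a n : ℕ) (ha : 0 < a) (hn : 0 < n) :
    n * (n * a - 1).choose (a - 1) = (n * a).choose a := by
  have hna : 1 ≤ n * a := Nat.one_le_iff_ne_zero.mpr (by positivity)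
  have h := Nat.add_one_mul_choose_eq (n * a - 1) (a - 1)
  rw [Nat.sub_add_cancel hna, Nat.sub_add_cancel ha] at h
  have h2 : a * (n * (n * a - 1).choose (a - 1)) = a * (n * a).choose a := by
    calc a * (n * (n * a - 1).choose (a - 1))
        = n * a * (n * a - 1).choose (a - 1) := by ring
      _ = (n * a).choose a * a := h
      _ = a * (n * a).choose a := by ring
  exact Nat.eq_of_mul_eq_mul_left ha h2

lemma aux_key (a : ℕ) (ha : 1 < a) :
    ∀ l c : ℕ, 1 ≤ l → l < c →
      (c * a - 1).choose (a - 1) * c.choose l ≤ (c * a).choose (l * a) := by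
  intro l
  induction l with
  | zero => intro c h; omega
  | succ m ih =>
    intro c _ hlc
    rcases Nat.eq_zero_or_pos m with hm | hm
    · -- base case l = 1
      subst hm
      have ha0 : 0 < a := by omega
      have hc0 : 0 < c := by omega
      simp only [zero_add, one_mul, Nat.choose_one_right]
      rw [mul_comm, aux_mul_choose_pred a c ha0 hc0]
    · -- step: m ≥ 1, m + 1 < c
      have hc : m + 1 < c := hlc
      have hc2 : 2 ≤ c := by omega
      have ha0 : 0 < a := by omega
      have hIH := ih (c - 1) hm (by omega)
      -- key positive factor
      set K := ((m + 1) * a).choose a with hK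
      have hKpos : 0 < K := Nat.choose_pos (Nat.le_mul_of_pos_left a (by omega))
      -- identity: C(ca,(m+1)a) * K = C(ca,a) * C((c-1)a, m*a)
      have hid : (c * a).choose ((m + 1) * a) * K
          = (c * a).choose a * ((c - 1) * a).choose (m * a) := by
        have h1 : (m + 1) * a ≤ c * a := Nat.mul_le_mul_right a (by omega)
        have h2 : a ≤ (m + 1) * a := Nat.le_mul_of_pos_left a (by omega)
        have := Nat.choose_mul (n := c * a) h2
        rw [hK, this]
        congr 2
        · rw [Nat.sub_one_mul]
        · rw [add_mul, one_mul, Nat.add_sub_cancel]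
      -- K = (m+1) * C((m+1)a - 1, a - 1)
      have hK2 : (m + 1) * ((m + 1) * a - 1).choose (a - 1) = K :=
        aux_mul_choose_pred a (m + 1) ha0 (by omega)
      -- c * C(ca - 1, a - 1) = C(ca, a)
      have hC : c * (c * a - 1).choose (a - 1) = (c * a).choose a :=
        aux_mul_choose_pred a c ha0 (by omega)
      -- (m+1) * C(c, m+1) = c * C(c-1, m)
      have hP : c * (c - 1).choose m = c.choose (m + 1) * (m + 1) := by
        have := Nat.add_one_mul_choose_eq (c - 1) m
        rwa [Nat.sub_add_cancel (by omega)] at this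
      -- monotonicity
      have hmono : ((m + 1) * a - 1).choose (a - 1) ≤ ((c - 1) * a - 1).choose (a - 1) :=
        Nat.choose_le_choose _ (by
          have : (m + 1) * a ≤ (c - 1) * a := Nat.mul_le_mul_right a (by omega)
          omega)
      -- main multiplied inequality
      have hmain : (c * a - 1).choose (a - 1) * c.choose (m + 1) * K
          ≤ (c * a).choose ((m + 1) * a) * K := by
        rw [hid]
        calc (c * a - 1).choose (a - 1) * c.choose (m + 1) * K
            = (c * a - 1).choose (a - 1) * (c.choose (m + 1) * (m + 1))
                * ((m + 1) * a - 1).choose (a - 1) := by rw [← hK2]; ring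
          _ = (c * a - 1).choose (a - 1) * (c * (c - 1).choose m)
                * ((m + 1) * a - 1).choose (a - 1) := by rw [hP]
          _ ≤ (c * a - 1).choose (a - 1) * (c * (c - 1).choose m)
                * ((c - 1) * a - 1).choose (a - 1) :=
              Nat.mul_le_mul_left _ hmono
          _ = (c * a).choose a * (((c - 1) * a - 1).choose (a - 1) * (c - 1).choose m) := by
              rw [← hC]; ring
          _ ≤ (c * a).choose a * ((c - 1) * a).choose (m * a) :=
              Nat.mul_le_mul_left _ hIH
      exact Nat.le_of_mul_le_mul_right hmain hKpos

theorem stmt_0 (a c l : ℕ) (ha : 1 < a) (hl : 1 ≤ l) (hlc : l < c) :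
    (c * a - 1).choose (a - 1) * c.choose l ≤ (c * a).choose (l * a) := by
  exact aux_key a ha l c hl hlc
end

section
/- For integers n, k with 2 ≤ k ≤ 2n/3, we have C(⌊n/2⌋, ⌊k/2⌋) < 2 · C(n,k) · (3k/(4n))^⌈k/2⌉. -/
/-- Doubled three-term binomial lower bound: `a^s*(2a²+2(s+2)ad+(s+2)(s+1)d²) ≤ 2(a+d)^(s+2)`. -/
lemma bin3 (a d : ℕ) : ∀ s : ℕ,
    a^s * (2*a^2 + 2*(s+2)*(a*d) + ((s+2)*(s+1))*d^2) ≤ 2*(a+d)^(s+2)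
  | 0 => le_of_eq (by ring)
  | (s+1) => by
    calc a^(s+1) * (2*a^2 + 2*(s+3)*(a*d) + ((s+3)*(s+2))*d^2)
        ≤ (a+d) * (a^s * (2*a^2 + 2*(s+2)*(a*d) + ((s+2)*(s+1))*d^2)) :=
          Nat.le.intro (k := (s+2)*(s+1)*(a^s*d^3)) (by ring)
      _ ≤ (a+d) * (2*(a+d)^(s+2)) := Nat.mul_le_mul_left _ (bin3 a d s)
      _ = 2*(a+d)^(s+3) := by ring

/-- The key step inequality (★). -/
lemma star (K n : ℕ) (hK : 4 ≤ K) (h : 3*K ≤ 2*n) :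
    4*(n/2)*(K-1)*(n*(K-2))^((K-1)/2) ≤ 3*(K/2)*(n-1)*(K*(n-2))^((K-1)/2) := by
  have hm : 2*(n/2) ≤ n := by omega
  by_cases h4 : K = 4
  · subst h4
    obtain ⟨f, hf⟩ : ∃ f, n = f + 6 := ⟨n - 6, by omega⟩
    have h1 : n - 1 = f + 5 := by omega
    have h2 : n - 2 = f + 4 := by omega
    rw [h1, h2]
    norm_num
    rw [hf] at hm ⊢
    nlinarith [mul_le_mul_left hm (f+6), sq_nonneg f]
  · have hK5 : 5 ≤ K := by omega
    obtain ⟨s, hs⟩ : ∃ s, (K-1)/2 = s + 2 := ⟨(K-1)/2 - 2, by omega⟩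
    have hKn : K ≤ n := by omega
    have e1 : K*(n-2) = n*(K-2) + 2*(n-K) := by
      zify [show 2 ≤ n by omega, show 2 ≤ K by omega, hKn]; ring
    rw [e1, hs]
    have hA : 4*n*(K-1)*((n*(K-2))^2) ≤
        3*(K/2)*(n-1)*(2*(n*(K-2))^2 + 2*(s+2)*((n*(K-2))*(2*(n-K))) +
          ((s+2)*(s+1))*(2*(n-K))^2) := by
      have hj2 : K = 2*(K/2) ∨ K = 2*(K/2) + 1 := by omega
      rcases hj2 with hK2 | hK2
      · -- even: K = 2s+6
        have r0 : K = 2*s+6 := by omega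
        have r6 : K/2 = s+3 := by omega
        obtain ⟨f, hf⟩ : ∃ f, n = 3*s+9+f := ⟨n - (3*s+9), by omega⟩
        have r1 : K-2 = 2*s+4 := by omega
        have r2 : K-1 = 2*s+5 := by omega
        have r3 : n-1 = 3*s+8+f := by omega
        have r4 : n-K = s+3+f := by omega
        rw [r1, r2, r3, r4, r6, hf]
        exact Nat.le.intro (k := 20736 + 26568*f + 5616*f^2 + 328*f^3 + 46008*s + 53028*s*f + 9504*s*f^2 + 452*s*f^3 + 41580*s^2 + 41616*s^2*f + 5892*s^2*f^2 + 200*s^2*f^3 + 19560*s^3 + 16056*s^3*f + 1584*s^3*f^2 + 28*s^3*f^3 + 5040*s^4 + 3048*s^4*f + 156*s^4*f^2 + 672*s^5 + 228*s^5*f + 36*s^6) (by ring)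
      · -- odd: K = 2s+5
        have r0 : K = 2*s+5 := by omega
        have r6 : K/2 = s+2 := by omega
        obtain ⟨f, hf⟩ : ∃ f, n = 3*s+8+f := ⟨n - (3*s+8), by omega⟩
        have r1 : K-2 = 2*s+3 := by omega
        have r2 : K-1 = 2*s+4 := by omega
        have r3 : n-1 = 3*s+7+f := by omega
        have r4 : n-K = s+3+f := by omega
        rw [r1, r2, r3, r4, r6, hf]
        exact Nat.le.intro (k := 1872 + 8352*f + 2244*f^2 + 156*f^3 + 4800*s + 20520*s*f + 4710*s*f^2 + 270*s*f^3 + 5560*s^2 + 19992*s^2*f + 3642*s^2*f^2 + 152*s^2*f^3 + 3818*s^3 + 9702*s^3*f + 1236*s^3*f^2 + 28*s^3*f^3 + 1602*s^4 + 2352*s^4*f + 156*s^4*f^2 + 372*s^5 + 228*s^5*f + 36*s^6) (by ring)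
    have c1 : 2*(4*(n/2)*(K-1)*(n*(K-2))^(s+2)) ≤
        2*(3*(K/2)*(n-1)*(n*(K-2) + 2*(n-K))^(s+2)) := by
      calc 2*(4*(n/2)*(K-1)*(n*(K-2))^(s+2))
          = (2*(n/2))*((4*(K-1)*((n*(K-2))^2))*(n*(K-2))^s) := by ring
        _ ≤ n*((4*(K-1)*((n*(K-2))^2))*(n*(K-2))^s) := mul_le_mul_left hm _
        _ = (4*n*(K-1)*((n*(K-2))^2))*(n*(K-2))^s := by ring
        _ ≤ (3*(K/2)*(n-1)*(2*(n*(K-2))^2 + 2*(s+2)*((n*(K-2))*(2*(n-K))) +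
              ((s+2)*(s+1))*(2*(n-K))^2))*(n*(K-2))^s := mul_le_mul_left hA _
        _ = (3*(K/2)*(n-1))*((n*(K-2))^s*(2*(n*(K-2))^2 +
              2*(s+2)*((n*(K-2))*(2*(n-K))) + ((s+2)*(s+1))*(2*(n-K))^2)) := by ring
        _ ≤ (3*(K/2)*(n-1))*(2*(n*(K-2) + 2*(n-K))^(s+2)) :=
              Nat.mul_le_mul_left _ (bin3 (n*(K-2)) (2*(n-K)) s)
        _ = 2*(3*(K/2)*(n-1)*(n*(K-2) + 2*(n-K))^(s+2)) := by ring
    omega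

lemma two_choose_two (n : ℕ) : 2 * n.choose 2 = n * (n-1) := by
  induction n with
  | zero => rfl
  | succ n ih =>
    rw [Nat.choose_succ_succ, Nat.mul_add, ih, Nat.choose_one_right]
    cases n with
    | zero => rfl
    | succ m => show 2*(m+1) + (m+1)*m = (m+2)*(m+1); ring

lemma six_choose_three (n : ℕ) : 6 * n.choose 3 = n * (n-1) * (n-2) := by
  induction n with
  | zero => rfl
  | succ n ih =>
    rw [Nat.choose_succ_succ, Nat.mul_add, ih]
    have h2 : (6:ℕ) * n.choose 2 = 3*(2*n.choose 2) := by ring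
    rw [h2, two_choose_two]
    match n with
    | 0 => rfl
    | 1 => rfl
    | (m+2) =>
        rw [show m+2-1 = m+1 by omega, show m+2-2 = m by omega,
            show m+2+1-1 = m+2 by omega, show m+2+1-2 = m+1 by omega]
        ring

/-- Main inequality in ℕ form. -/
lemma key (k : ℕ) : ∀ n : ℕ, 2 ≤ k → 3*k ≤ 2*n →
    (n/2).choose (k/2) * (4*n)^((k+1)/2) < 2 * n.choose k * (3*k)^((k+1)/2) := by
  induction k using Nat.strong_induction_on with
  | _ k ih =>
    intro n hk hkn
    match k, hk with
    | 2, _ =>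
      norm_num
      have h2 : 2 * n.choose 2 * 6 = (2 * n.choose 2) * 6 := by ring
      rw [h2, two_choose_two]
      obtain ⟨f, hf⟩ : ∃ f, n = f + 3 := ⟨n - 3, by omega⟩
      have hm : 2*(n/2) ≤ n := by omega
      rw [hf] at hm ⊢
      have h1 : (f+3) - 1 = f + 2 := by omega
      rw [h1]
      nlinarith [mul_le_mul_left hm (2*(f+3))]
    | 3, _ =>
      norm_num
      have h2 : 2 * n.choose 3 * 81 = 27 * (6 * n.choose 3) := by ring
      rw [h2, six_choose_three]
      obtain ⟨f, hf⟩ : ∃ f, n = f + 5 := ⟨n - 5, by omega⟩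
      have hm : 2*(n/2) ≤ n := by omega
      rw [hf] at hm ⊢
      have h1 : (f+5) - 1 = f + 4 := by omega
      have h3 : (f+5) - 2 = f + 3 := by omega
      rw [h1, h3]
      nlinarith [mul_le_mul_left hm (8*(f+5)*(f+5)), sq_nonneg f]
    | (K+4), _ =>
      have IH := ih (K+2) (by omega) (n-2) (by omega) (by omega)
      obtain ⟨n2, hn2⟩ : ∃ n2, n = n2 + 2 := ⟨n - 2, by omega⟩
      have hn24 : 4 ≤ n2 := by omega
      obtain ⟨m', hm'⟩ : ∃ m', n/2 = m' + 1 := ⟨n/2 - 1, by omega⟩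
      obtain ⟨j', hj'⟩ : ∃ j', (K+4)/2 = j' + 1 := ⟨(K+4)/2 - 1, by omega⟩
      obtain ⟨t, ht⟩ : ∃ t, (K+4+1)/2 = t + 1 := ⟨(K+5)/2 - 1, by omega⟩
      have e2 : (K+2)/2 = j' := by omega
      have e3 : (K+2+1)/2 = t := by omega
      have e4 : (n-2)/2 = m' := by omega
      rw [e2, e3, e4, show n - 2 = n2 by omega] at IH
      rw [hm', hj', ht, hn2]
      -- star instance
      have hstar := star (K+4) (n2+2) (by omega) (by omega)
      rw [show (n2+2)/2 = m' + 1 by omega, show (K+4)/2 = j' + 1 from hj',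
          show (K+4-1)/2 = t by omega,
          show (K+4) - 1 = K+3 by omega, show (K+4) - 2 = K+2 by omega,
          show (n2+2) - 1 = n2+1 by omega, show (n2+2) - 2 = n2 by omega] at hstar
      -- choose identities
      have i1 : (m'+1) * m'.choose j' = (m'+1).choose (j'+1) * (j'+1) := by
        have := Nat.add_one_mul_choose_eq m' j'
        simpa using this
      have i3 : ((n2+2)*(n2+1)) * n2.choose (K+2) = ((K+4)*(K+3)) * (n2+2).choose (K+4) := by
        have a1 : (n2+1) * n2.choose (K+2) = (n2+1).choose (K+3) * (K+3) := by
          have := Nat.add_one_mul_choose_eq n2 (K+2); simpa using this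
        have a2 : (n2+2) * (n2+1).choose (K+3) = (n2+2).choose (K+4) * (K+4) := by
          have := Nat.add_one_mul_choose_eq (n2+1) (K+3); simpa using this
        calc ((n2+2)*(n2+1)) * n2.choose (K+2)
            = (n2+2) * ((n2+1) * n2.choose (K+2)) := by ring
          _ = (n2+2) * ((n2+1).choose (K+3) * (K+3)) := by rw [a1]
          _ = ((n2+2) * (n2+1).choose (K+3)) * (K+3) := by ring
          _ = ((n2+2).choose (K+4) * (K+4)) * (K+3) := by rw [a2]
          _ = ((K+4)*(K+3)) * (n2+2).choose (K+4) := by ring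
      have hXW : (3*(K+2))^t * (4*(n2+2))^t = (12*(n2+2)*(K+2))^t := by
        rw [← mul_pow]; congr 1; ring
      have hDW : (4*n2)^t * (3*(K+4))^t = (12*(K+4)*n2)^t := by
        rw [← mul_pow]; congr 1; ring
      have hW2 : ((n2+2)*(K+2))^t * (12*(K+4)*n2)^t = (12*(n2+2)*(K+2))^t * ((K+4)*n2)^t := by
        rw [← mul_pow, ← mul_pow]; congr 1; ring
      have hDG : (2 * (n2+2).choose (K+4) * ((K+4)*(n2+2)) * (12*(n2+2)*(K+2))^t) *
            (3*(j'+1)*(n2+1) * ((K+4)*n2)^t) =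
          (j'+1) * ((n2+2)*(n2+1)) * (((n2+2)*(K+2))^t * (4*n2)^t) *
            (2 * (n2+2).choose (K+4) * (3*(K+4))^(t+1)) := by
        calc (2 * (n2+2).choose (K+4) * ((K+4)*(n2+2)) * (12*(n2+2)*(K+2))^t) *
              (3*(j'+1)*(n2+1) * ((K+4)*n2)^t)
            = ((12*(n2+2)*(K+2))^t * ((K+4)*n2)^t) *
              ((j'+1)*((n2+2)*(n2+1))*(2*(n2+2).choose (K+4)*(3*(K+4)))) := by ring
          _ = (((n2+2)*(K+2))^t * (12*(K+4)*n2)^t) *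
              ((j'+1)*((n2+2)*(n2+1))*(2*(n2+2).choose (K+4)*(3*(K+4)))) := by rw [hW2]
          _ = (((n2+2)*(K+2))^t * ((4*n2)^t * (3*(K+4))^t)) *
              ((j'+1)*((n2+2)*(n2+1))*(2*(n2+2).choose (K+4)*(3*(K+4)))) := by rw [hDW]
          _ = (j'+1) * ((n2+2)*(n2+1)) * (((n2+2)*(K+2))^t * (4*n2)^t) *
              (2 * (n2+2).choose (K+4) * (3*(K+4))^(t+1)) := by ring
      -- main chain, multiplied by D
      apply Nat.lt_of_mul_lt_mul_left
        (a := (j'+1) * ((n2+2)*(n2+1)) * (((n2+2)*(K+2))^t * (4*n2)^t))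
      have hMpos : 0 < (m'+1) * ((n2+2)*(n2+1)) * ((n2+2)*(K+2))^t * (4*(n2+2))^(t+1) := by
        positivity
      calc (j'+1) * ((n2+2)*(n2+1)) * (((n2+2)*(K+2))^t * (4*n2)^t) *
            ((m'+1).choose (j'+1) * (4*(n2+2))^(t+1))
          = (m'.choose j' * (4*n2)^t) *
            ((m'+1) * ((n2+2)*(n2+1)) * ((n2+2)*(K+2))^t * (4*(n2+2))^(t+1)) := by
            rw [show (j'+1) * ((n2+2)*(n2+1)) * (((n2+2)*(K+2))^t * (4*n2)^t) *
                ((m'+1).choose (j'+1) * (4*(n2+2))^(t+1)) =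
                ((m'+1).choose (j'+1) * (j'+1)) * (((n2+2)*(n2+1)) *
                (((n2+2)*(K+2))^t * (4*n2)^t) * (4*(n2+2))^(t+1)) by ring, ← i1]
            ring
        _ < (2 * n2.choose (K+2) * (3*(K+2))^t) *
            ((m'+1) * ((n2+2)*(n2+1)) * ((n2+2)*(K+2))^t * (4*(n2+2))^(t+1)) :=
            mul_lt_mul_of_pos_right IH hMpos
        _ = (((n2+2)*(n2+1)) * n2.choose (K+2)) *
            (2 * (m'+1) * (3*(K+2))^t * ((n2+2)*(K+2))^t * (4*(n2+2))^(t+1)) := by ring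
        _ = (((K+4)*(K+3)) * (n2+2).choose (K+4)) *
            (2 * (m'+1) * (3*(K+2))^t * ((n2+2)*(K+2))^t * (4*(n2+2))^(t+1)) := by rw [i3]
        _ = ((3*(K+2))^t * (4*(n2+2))^t) *
            ((K+4)*(K+3)*(n2+2).choose (K+4)*2*(m'+1)*((n2+2)*(K+2))^t*(4*(n2+2))) := by ring
        _ = ((12*(n2+2)*(K+2))^t) *
            ((K+4)*(K+3)*(n2+2).choose (K+4)*2*(m'+1)*((n2+2)*(K+2))^t*(4*(n2+2))) := by rw [hXW]
        _ = (2 * (n2+2).choose (K+4) * ((K+4)*(n2+2)) * (12*(n2+2)*(K+2))^t) *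
            (4*(m'+1)*(K+3) * ((n2+2)*(K+2))^t) := by ring
        _ ≤ (2 * (n2+2).choose (K+4) * ((K+4)*(n2+2)) * (12*(n2+2)*(K+2))^t) *
            (3*(j'+1)*(n2+1) * ((K+4)*n2)^t) := Nat.mul_le_mul_left _ hstar
        _ = (j'+1) * ((n2+2)*(n2+1)) * (((n2+2)*(K+2))^t * (4*n2)^t) *
            (2 * (n2+2).choose (K+4) * (3*(K+4))^(t+1)) := hDG

theorem stmt_3 (n k : ℕ) (hk : 2 ≤ k) (hkn : 3 * k ≤ 2 * n) :
    ((n / 2).choose (k / 2) : ℝ) < 2 * n.choose k * ((3 * k : ℝ) / (4 * n)) ^ ((k + 1) / 2) := by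
  have h := key k n hk hkn
  have hn : 0 < n := by omega
  have hpos : (0:ℝ) < (4*(n:ℝ))^((k+1)/2) := by
    apply pow_pos
    have : (0:ℝ) < (n:ℝ) := by exact_mod_cast hn
    linarith
  rw [div_pow, ← mul_div_assoc, lt_div_iff₀ hpos]
  exact_mod_cast h
end

section
/- Let d, k, t be positive integers and a > 0 a real number such that k ≤ d and t/(d-k+1) ≤ a. Then (d+t)(d+t-1)⋯(d+t-k+1) < d(d-1)⋯(d-k+1) · (1 + (1+a)^k · t / (a(d-k+1))). -/
lemma aux_pow (a : ℝ) (ha : 0 < a) (r : ℝ) (hr : 0 ≤ r) (hr1 : r ≤ 1) :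
    ∀ k : ℕ, (1 + r * a) ^ k ≤ 1 + r * ((1 + a) ^ k - 1) := by
  intro k
  induction k with
  | zero => simp
  | succ n ih =>
    have h2 : (1:ℝ) ≤ (1 + a) ^ n := one_le_pow₀ (by linarith)
    have hnn : (0:ℝ) ≤ 1 + r * a := by nlinarith
    calc (1 + r * a) ^ (n + 1) = (1 + r * a) ^ n * (1 + r * a) := pow_succ _ _
      _ ≤ (1 + r * ((1 + a) ^ n - 1)) * (1 + r * a) := by
          apply mul_le_mul_of_nonneg_right ih hnn
      _ ≤ 1 + r * ((1 + a) ^ (n + 1) - 1) := by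
          rw [pow_succ]
          nlinarith [mul_nonneg (mul_nonneg (mul_nonneg ha.le hr) (sub_nonneg.2 hr1)) (sub_nonneg.2 h2)]

theorem stmt_4 (d k t : ℕ) (a : ℝ) (hd : 0 < d) (hk : 0 < k) (ht : 0 < t)
    (ha : 0 < a) (hkd : k ≤ d) (hta : (t : ℝ) / ((d : ℝ) - k + 1) ≤ a) :
    (∏ i ∈ Finset.range k, ((d : ℝ) + t - i)) <
      (∏ i ∈ Finset.range k, ((d : ℝ) - i)) *
        (1 + (1 + a) ^ k * t / (a * ((d : ℝ) - k + 1))) := by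
  set D : ℝ := (d : ℝ) - k + 1 with hDdef
  have hkd' : (k : ℝ) ≤ d := Nat.cast_le.2 hkd
  have hD : (1 : ℝ) ≤ D := by simp [hDdef]; linarith
  have hDpos : (0 : ℝ) < D := by linarith
  set s : ℝ := (t : ℝ) / D with hsdef
  have ht' : (0 : ℝ) < t := by exact_mod_cast ht
  have hs : 0 < s := div_pos ht' hDpos
  have hsa : s ≤ a := hta
  have hfac : ∀ i ∈ Finset.range k, ((d : ℝ) - i) ≥ D := by
    intro i hi
    have : (i : ℝ) ≤ (k : ℝ) - 1 := by
      have := Finset.mem_range.1 hi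
      have : (i:ℝ) + 1 ≤ k := by exact_mod_cast Nat.succ_le_of_lt this
      linarith
    simp only [hDdef]; linarith
  have hPpos : 0 < ∏ i ∈ Finset.range k, ((d : ℝ) - i) := by
    apply Finset.prod_pos
    intro i hi
    linarith [hfac i hi]
  -- step 1: ∏ (d+t-i) ≤ ∏ (d-i) * (1+s)^k
  have step1 : (∏ i ∈ Finset.range k, ((d : ℝ) + t - i)) ≤
      (∏ i ∈ Finset.range k, ((d : ℝ) - i)) * (1 + s) ^ k := by
    rw [show (1 + s) ^ k = ∏ _i ∈ Finset.range k, (1 + s) by simp, ← Finset.prod_mul_distrib]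
    apply Finset.prod_le_prod
    · intro i hi
      have := hfac i hi
      linarith
    · intro i hi
      have hdi := hfac i hi
      have hts : (t : ℝ) ≤ ((d : ℝ) - i) * s := by
        have h1 : D * s = t := by rw [hsdef]; field_simp
        have : D * s ≤ ((d:ℝ) - i) * s := mul_le_mul_of_nonneg_right hdi hs.le
        linarith
      nlinarith
  -- step 2: (1+s)^k ≤ 1 + ((1+a)^k - 1) * s / a
  have step2 : (1 + s) ^ k ≤ 1 + (s / a) * ((1 + a) ^ k - 1) := by
    have h := aux_pow a ha (s / a) (div_nonneg hs.le ha.le)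
      ((div_le_one ha).2 hsa) k
    have : s / a * a = s := div_mul_cancel₀ s ha.ne'
    rw [this] at h
    exact h
  -- step 3: strict
  have hpow1 : (1 : ℝ) ≤ (1 + a) ^ k := one_le_pow₀ (by linarith)
  have step3 : 1 + (s / a) * ((1 + a) ^ k - 1) < 1 + (1 + a) ^ k * t / (a * D) := by
    have hsa' : (1 + a) ^ k * t / (a * D) = (s / a) * (1 + a) ^ k := by
      field_simp [hsdef]
      ring
      rw [hsdef]; field_simp
    rw [hsa']
    have : 0 < s / a := div_pos hs ha
    nlinarith
  calc (∏ i ∈ Finset.range k, ((d : ℝ) + t - i))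
      ≤ (∏ i ∈ Finset.range k, ((d : ℝ) - i)) * (1 + s) ^ k := step1
    _ ≤ (∏ i ∈ Finset.range k, ((d : ℝ) - i)) * (1 + (s / a) * ((1 + a) ^ k - 1)) := by
        apply mul_le_mul_of_nonneg_left step2 hPpos.le
    _ < _ := by exact mul_lt_mul_of_pos_left step3 hPpos
end

section
/- Let U be a finite set of size u > 1, and let P be a partition of U in which every part has size at least 2. For 2 ≤ k₀ ≤ u, let N_P(k₀) be the number of k₀-element subsets of U that are unions of parts of P. Then N_P(k₀) ≤ C(⌊u/2⌋, ⌊k₀/2⌋). -/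
theorem stmt_6 {α : Type*} [DecidableEq α] (s : Finset α) (P : Finpartition s)
    (hu : 1 < s.card) (hparts : ∀ p ∈ P.parts, 2 ≤ p.card)
    (k₀ : ℕ) (hk₀ : 2 ≤ k₀) (hk₀u : k₀ ≤ s.card) :
    ((s.powersetCard k₀).filter
        (fun γ => ∀ p ∈ P.parts, p ⊆ γ ∨ Disjoint p γ)).card ≤
      (s.card / 2).choose (k₀ / 2) := by
  classical
  -- choose a "half" of each finset
  have hhalf : ∀ p : Finset α, ∃ t ⊆ p, t.card = p.card / 2 :=
    fun p => Finset.exists_subset_card_eq (Nat.div_le_self _ _)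
  choose half hhalf_sub hhalf_card using hhalf
  have hdisj : ∀ p ∈ P.parts, ∀ q ∈ P.parts, p ≠ q → Disjoint (half p) (half q) := by
    intro p hp q hq hpq
    exact (P.disjoint hp hq hpq).mono (hhalf_sub p) (hhalf_sub q)
  -- the key parity identity for sums over subfamilies of parts
  have key : ∀ T : Finset (Finset α), T ⊆ P.parts →
      2 * (∑ p ∈ T, p.card / 2) + (T.filter (fun p => p.card % 2 = 1)).card
        = ∑ p ∈ T, p.card := by
    intro T hT
    rw [Finset.card_filter, Finset.mul_sum, ← Finset.sum_add_distrib]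
    refine Finset.sum_congr rfl fun p _ => ?_
    have := Nat.div_add_mod p.card 2
    split <;> omega
  set H : Finset α := P.parts.biUnion half with hH
  have hHcard : H.card = ∑ p ∈ P.parts, p.card / 2 := by
    rw [hH, Finset.card_biUnion hdisj]
    exact Finset.sum_congr rfl fun p _ => hhalf_card p
  have hHsub : H ⊆ s := by
    intro x hx
    rcases Finset.mem_biUnion.1 hx with ⟨p, hp, hxp⟩
    exact P.le hp (hhalf_sub p hxp)
  set u := s.card with hu_def
  set h := ∑ p ∈ P.parts, p.card / 2 with hh_def
  set O := (P.parts.filter (fun p => p.card % 2 = 1)).card with hO_def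
  have hsum : ∑ p ∈ P.parts, p.card = u := P.sum_card_parts
  have hglobal : 2 * h + O = u := by rw [hh_def, hO_def, key P.parts (subset_refl _), hsum]
  -- the dummy set D
  have hDle : u / 2 - h ≤ (s \ H).card := by
    rw [Finset.card_sdiff_of_subset hHsub, hHcard]
    omega
  obtain ⟨D, hDsub, hDcard⟩ := Finset.exists_subset_card_eq (s := s \ H) (n := u / 2 - h) hDle
  have hHD : Disjoint H D := by
    refine Finset.disjoint_left.2 fun x hx hxD => ?_
    exact (Finset.mem_sdiff.1 (hDsub hxD)).2 hx
  -- pads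
  set tok : Finset α → Finset α := fun γ => (P.parts.filter (· ⊆ γ)).biUnion half with htok
  have hpadex : ∀ γ : Finset α, ∃ e ⊆ D,
      e.card = min (k₀ / 2 - (tok γ).card) D.card :=
    fun γ => Finset.exists_subset_card_eq (s := D) (min_le_right _ _)
  choose pad hpad_sub hpad_card using hpadex
  set F : Finset α → Finset α := fun γ => tok γ ∪ pad γ with hF
  set A := ((s.powersetCard k₀).filter
      (fun γ => ∀ p ∈ P.parts, p ⊆ γ ∨ Disjoint p γ)) with hA
  set B : Finset α := H ∪ D with hB
  have hBcard : B.card = u / 2 := by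
    rw [hB, Finset.card_union_of_disjoint hHD, hHcard, hDcard]
    omega
  -- facts about γ ∈ A
  have hAmem : ∀ γ ∈ A, γ ⊆ s ∧ γ.card = k₀ ∧ ∀ p ∈ P.parts, p ⊆ γ ∨ Disjoint p γ := by
    intro γ hγ
    rw [hA, Finset.mem_filter, Finset.mem_powersetCard] at hγ
    exact ⟨hγ.1.1, hγ.1.2, hγ.2⟩
  have hcover : ∀ γ ∈ A, (P.parts.filter (· ⊆ γ)).biUnion id = γ := by
    intro γ hγ
    obtain ⟨hγs, hγc, hγp⟩ := hAmem γ hγ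
    ext x
    simp only [Finset.mem_biUnion, Finset.mem_filter, id]
    constructor
    · rintro ⟨p, ⟨hp, hpγ⟩, hxp⟩
      exact hpγ hxp
    · intro hx
      obtain ⟨p, hp, hxp⟩ := P.exists_mem (hγs hx)
      refine ⟨p, ⟨hp, ?_⟩, hxp⟩
      rcases hγp p hp with h' | h'
      · exact h'
      · exact absurd (Finset.disjoint_left.1 h' hxp) (not_not.2 hx)
  have hsumk : ∀ γ ∈ A, ∑ p ∈ P.parts.filter (· ⊆ γ), p.card = k₀ := by
    intro γ hγ
    obtain ⟨hγs, hγc, hγp⟩ := hAmem γ hγ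
    have hdisj' : ∀ p ∈ P.parts.filter (· ⊆ γ), ∀ q ∈ P.parts.filter (· ⊆ γ),
        p ≠ q → Disjoint (id p) (id q) := by
      intro p hp q hq hpq
      exact P.disjoint (Finset.mem_filter.1 hp).1 (Finset.mem_filter.1 hq).1 hpq
    have := Finset.card_biUnion hdisj'
    rw [hcover γ hγ, hγc] at this
    simpa using this.symm
  have htokcard : ∀ γ ∈ A, (tok γ).card = ∑ p ∈ P.parts.filter (· ⊆ γ), p.card / 2 := by
    intro γ hγ
    rw [htok]
    rw [Finset.card_biUnion (fun p hp q hq hpq =>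
      hdisj p (Finset.mem_filter.1 hp).1 q (Finset.mem_filter.1 hq).1 hpq)]
    exact Finset.sum_congr rfl fun p _ => hhalf_card p
  -- arithmetic for γ ∈ A
  have harith : ∀ γ ∈ A, (tok γ).card ≤ k₀ / 2 ∧ k₀ / 2 - (tok γ).card ≤ D.card := by
    intro γ hγ
    have hkey := key (P.parts.filter (· ⊆ γ)) (Finset.filter_subset _ _)
    rw [hsumk γ hγ] at hkey
    have hOle : ((P.parts.filter (· ⊆ γ)).filter (fun p => p.card % 2 = 1)).card ≤ O := by
      rw [hO_def]
      exact Finset.card_le_card (Finset.filter_subset_filter _ (Finset.filter_subset _ _))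
    rw [htokcard γ hγ, hDcard]
    omega
  have htoksub : ∀ γ, tok γ ⊆ H := by
    intro γ
    exact Finset.biUnion_subset_biUnion_of_subset_left _ (Finset.filter_subset _ _)
  -- F maps into powersetCard (k₀/2) of B
  have hmaps : ∀ γ ∈ A, F γ ∈ B.powersetCard (k₀ / 2) := by
    intro γ hγ
    obtain ⟨ht1, ht2⟩ := harith γ hγ
    rw [Finset.mem_powersetCard]
    constructor
    · exact Finset.union_subset ((htoksub γ).trans Finset.subset_union_left)
        ((hpad_sub γ).trans Finset.subset_union_right)
    · have hd : Disjoint (tok γ) (pad γ) :=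
        (hHD.mono (htoksub γ) (hpad_sub γ))
      rw [hF]
      rw [Finset.card_union_of_disjoint hd, hpad_card γ, min_eq_left ht2]
      omega
  -- injectivity
  have htokdet : ∀ γ ∈ A, ∀ p ∈ P.parts, (p ⊆ γ ↔ half p ⊆ tok γ) := by
    intro γ hγ p hp
    constructor
    · intro hpγ
      intro x hx
      exact Finset.mem_biUnion.2 ⟨p, Finset.mem_filter.2 ⟨hp, hpγ⟩, hx⟩
    · intro hsub
      have hne : (half p).Nonempty := by
        rw [← Finset.card_pos, hhalf_card p]
        have := hparts p hp
        omega
      obtain ⟨x, hx⟩ := hne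
      obtain ⟨q, hq, hxq⟩ := Finset.mem_biUnion.1 (hsub hx)
      obtain ⟨hq', hqγ⟩ := Finset.mem_filter.1 hq
      have hpq : p = q := by
        by_contra hne'
        exact Finset.disjoint_left.1 (P.disjoint hp hq' hne')
          (hhalf_sub p hx) (hhalf_sub q hxq)
      rw [hpq]; exact hqγ
  have hinj : Set.InjOn F A := by
    intro γ₁ hγ₁ γ₂ hγ₂ hFeq
    simp only [Finset.mem_coe] at hγ₁ hγ₂
    have htd : ∀ γ, tok γ = F γ \ D := by
      intro γ
      rw [hF]
      rw [Finset.union_sdiff_distrib,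
        Finset.sdiff_eq_self_of_disjoint (hHD.mono (htoksub γ) le_rfl),
        Finset.sdiff_eq_empty_iff_subset.2 (hpad_sub γ), Finset.union_empty]
    have htokeq : tok γ₁ = tok γ₂ := by rw [htd, htd, hFeq]
    have hTeq : P.parts.filter (· ⊆ γ₁) = P.parts.filter (· ⊆ γ₂) := by
      ext p
      simp only [Finset.mem_filter]
      constructor
      · rintro ⟨hp, hpγ⟩
        exact ⟨hp, (htokdet γ₂ hγ₂ p hp).2 (htokeq ▸ (htokdet γ₁ hγ₁ p hp).1 hpγ)⟩
      · rintro ⟨hp, hpγ⟩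
        exact ⟨hp, (htokdet γ₁ hγ₁ p hp).2 (htokeq ▸ (htokdet γ₂ hγ₂ p hp).1 hpγ)⟩
    rw [← hcover γ₁ hγ₁, ← hcover γ₂ hγ₂, hTeq]
  calc A.card ≤ (B.powersetCard (k₀ / 2)).card :=
        Finset.card_le_card_of_injOn F hmaps hinj
    _ = (u / 2).choose (k₀ / 2) := by rw [Finset.card_powersetCard, hBcard]
end

section
/- Let U be a finite set of size u > 1, and let P be a partition of U with all parts of size at least 2. For 2 ≤ k₀ ≤ u, let N_P(k₀) be the number of k₀-element subsets of U that are unions of parts of P. Then N_P(k₀) = 1 if k₀ = u, and N_P(k₀) ≤ C(u, k₀)/(u-1) otherwise. -/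
private lemma aux7 {α : Type*} [DecidableEq α] {s : Finset α} (P : Finpartition s)
    (hparts : ∀ p ∈ P.parts, 2 ≤ p.card)
    {γ : Finset α} (hγs : γ ⊆ s) (hγ : ∀ p ∈ P.parts, p ⊆ γ ∨ Disjoint p γ)
    {x y : α} (hx : x ∈ γ) (hys : y ∈ s) (hyγ : y ∉ γ) :
    P.part x \ (insert y (γ.erase x)) = {x} ∧
    P.part y ∩ (insert y (γ.erase x)) = {y} ∧
    (∀ r ∈ P.parts, r ≠ P.part x → r ≠ P.part y →
      (r ⊆ insert y (γ.erase x) ∨ Disjoint r (insert y (γ.erase x)))) ∧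
    (¬ P.part x ⊆ insert y (γ.erase x) ∧ ¬ Disjoint (P.part x) (insert y (γ.erase x))) ∧
    (¬ P.part y ⊆ insert y (γ.erase x) ∧ ¬ Disjoint (P.part y) (insert y (γ.erase x))) ∧
    P.part x ≠ P.part y ∧ γ = insert x ((insert y (γ.erase x)).erase y) := by
  have hxs : x ∈ s := hγs hx
  have hpx : P.part x ∈ P.parts := P.part_mem.2 hxs
  have hqy : P.part y ∈ P.parts := P.part_mem.2 hys
  have hxp : x ∈ P.part x := P.mem_part hxs
  have hyq : y ∈ P.part y := P.mem_part hys
  have hxy : x ≠ y := fun h => hyγ (h ▸ hx)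
  have hpγ : P.part x ⊆ γ := by
    rcases hγ _ hpx with h | h
    · exact h
    · exact absurd hx (Finset.disjoint_left.mp h hxp)
  have hqγ : Disjoint (P.part y) γ := by
    rcases hγ _ hqy with h | h
    · exact absurd (h hyq) hyγ
    · exact h
  have hxδ : x ∉ insert y (γ.erase x) := by
    simp [hxy]
  have hd : P.part x \ (insert y (γ.erase x)) = {x} := by
    ext z
    simp only [Finset.mem_sdiff, Finset.mem_singleton]
    constructor
    · rintro ⟨hzp, hzδ⟩
      by_contra hzx
      exact hzδ (Finset.subset_insert _ _ (Finset.mem_erase.mpr ⟨hzx, hpγ hzp⟩))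
    · rintro rfl; exact ⟨hxp, hxδ⟩
  have he : P.part y ∩ (insert y (γ.erase x)) = {y} := by
    ext z
    simp only [Finset.mem_inter, Finset.mem_singleton]
    constructor
    · rintro ⟨hzq, hzδ⟩
      rcases Finset.mem_insert.mp hzδ with h | h
      · exact h
      · exact absurd (Finset.mem_of_mem_erase h) (Finset.disjoint_left.mp hqγ hzq)
    · rintro rfl; exact ⟨hyq, Finset.mem_insert_self _ _⟩
  have hf : ∀ r ∈ P.parts, r ≠ P.part x → r ≠ P.part y →
      (r ⊆ insert y (γ.erase x) ∨ Disjoint r (insert y (γ.erase x))) := by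
    intro r hr hrp hrq
    rcases hγ _ hr with h | h
    · left
      intro z hz
      refine Finset.subset_insert _ _ (Finset.mem_erase.mpr ⟨?_, h hz⟩)
      rintro rfl
      exact hrp (P.part_eq_of_mem hr hz).symm
    · right
      rw [Finset.disjoint_left]
      intro z hzr hzδ
      rcases Finset.mem_insert.mp hzδ with rfl | hz
      · exact hrq (P.part_eq_of_mem hr hzr).symm
      · exact Finset.disjoint_left.mp h hzr (Finset.mem_of_mem_erase hz)
  have hxpart : ¬ P.part x ⊆ insert y (γ.erase x) ∧
      ¬ Disjoint (P.part x) (insert y (γ.erase x)) := by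
    constructor
    · intro h; exact hxδ (h hxp)
    · intro h
      obtain ⟨z, hz, hzx⟩ := Finset.exists_mem_ne
        (lt_of_lt_of_le one_lt_two (hparts _ hpx)) x
      have hzδ : z ∈ insert y (γ.erase x) := by
        by_contra hzδ
        have hmem : z ∈ P.part x \ (insert y (γ.erase x)) := Finset.mem_sdiff.mpr ⟨hz, hzδ⟩
        rw [hd] at hmem
        exact hzx (Finset.mem_singleton.mp hmem)
      exact Finset.disjoint_left.mp h hz hzδ
  have hypart : ¬ P.part y ⊆ insert y (γ.erase x) ∧
      ¬ Disjoint (P.part y) (insert y (γ.erase x)) := by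
    constructor
    · intro h
      obtain ⟨z, hz, hzy⟩ := Finset.exists_mem_ne
        (lt_of_lt_of_le one_lt_two (hparts _ hqy)) y
      have hmem : z ∈ P.part y ∩ (insert y (γ.erase x)) := Finset.mem_inter.mpr ⟨hz, h hz⟩
      rw [he] at hmem
      exact hzy (Finset.mem_singleton.mp hmem)
    · intro h; exact Finset.disjoint_left.mp h hyq (Finset.mem_insert_self _ _)
  have hpq : P.part x ≠ P.part y := by
    intro h
    exact Finset.disjoint_left.mp hqγ (h ▸ hxp) hx
  have hγrec : γ = insert x ((insert y (γ.erase x)).erase y) := by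
    rw [Finset.erase_insert (fun h => hyγ (Finset.mem_of_mem_erase h)),
      Finset.insert_erase hx]
  exact ⟨hd, he, hf, hxpart, hypart, hpq, hγrec⟩

theorem stmt_7 {α : Type*} [DecidableEq α] (s : Finset α) (P : Finpartition s)
    (hu : 1 < s.card) (hparts : ∀ p ∈ P.parts, 2 ≤ p.card)
    (k₀ : ℕ) (hk₀ : 2 ≤ k₀) (hk₀u : k₀ ≤ s.card) :
    (k₀ = s.card →
      ((s.powersetCard k₀).filter
          (fun γ => ∀ p ∈ P.parts, p ⊆ γ ∨ Disjoint p γ)).card = 1) ∧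
    (k₀ ≠ s.card →
      (((s.powersetCard k₀).filter
          (fun γ => ∀ p ∈ P.parts, p ⊆ γ ∨ Disjoint p γ)).card : ℝ) ≤
        (s.card.choose k₀ : ℝ) / (s.card - 1)) := by
  constructor
  · intro hk
    rw [Finset.card_eq_one]
    refine ⟨s, ?_⟩
    ext γ
    simp only [Finset.mem_filter, Finset.mem_powersetCard, Finset.mem_singleton]
    constructor
    · rintro ⟨⟨hsub, hcard⟩, _⟩
      exact Finset.eq_of_subset_of_card_le hsub (by omega)
    · rintro rfl
      exact ⟨⟨Finset.Subset.refl _, hk.symm⟩, fun p hp => Or.inl (P.le hp)⟩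
  · intro hk
    set A := (s.powersetCard k₀).filter
      (fun γ => ∀ p ∈ P.parts, p ⊆ γ ∨ Disjoint p γ) with hA
    set B := (s.powersetCard k₀).filter
      (fun γ => ¬ ∀ p ∈ P.parts, p ⊆ γ ∨ Disjoint p γ) with hB
    have hAB : A.card + B.card = (s.card).choose k₀ := by
      rw [hA, hB, Finset.card_filter_add_card_filter_not, Finset.card_powersetCard]
    have hAmem : ∀ γ ∈ A, γ ⊆ s ∧ γ.card = k₀ ∧ ∀ p ∈ P.parts, p ⊆ γ ∨ Disjoint p γ := by
      intro γ hγ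
      rw [hA, Finset.mem_filter, Finset.mem_powersetCard] at hγ
      exact ⟨hγ.1.1, hγ.1.2, hγ.2⟩
    suffices hmain : A.card * (s.card - 1) ≤ (s.card).choose k₀ by
      have hpos : (0:ℝ) < (s.card : ℝ) - 1 := by
        have : (1:ℝ) < (s.card : ℝ) := by exact_mod_cast hu
        linarith
      rw [le_div_iff₀ hpos]
      have hle := (Nat.cast_le (α := ℝ)).mpr hmain
      rw [Nat.cast_mul, Nat.cast_sub (by omega : 1 ≤ s.card)] at hle
      simpa using hle
    by_cases hk2 : k₀ + 2 ≤ s.card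
    · -- main double-counting case
      set S := A.sigma (fun γ => γ ×ˢ (s \ γ)) with hS
      have hScard : S.card = A.card * (k₀ * (s.card - k₀)) := by
        rw [hS, Finset.card_sigma]
        have hconst : ∀ γ ∈ A, (γ ×ˢ (s \ γ)).card = k₀ * (s.card - k₀) := by
          intro γ hγ
          obtain ⟨hγs, hγcard, _⟩ := hAmem γ hγ
          rw [Finset.card_product, Finset.card_sdiff_of_subset hγs, hγcard]
        rw [Finset.sum_congr rfl hconst, Finset.sum_const, smul_eq_mul]
      have hSmem : ∀ t : (Σ _ : Finset α, α × α), t ∈ S →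
          t.1 ∈ A ∧ t.2.1 ∈ t.1 ∧ t.2.2 ∈ s ∧ t.2.2 ∉ t.1 := by
        intro t ht
        rw [hS, Finset.mem_sigma] at ht
        obtain ⟨h1, h2⟩ := ht
        rw [Finset.mem_product] at h2
        obtain ⟨h2, h3⟩ := h2
        rw [Finset.mem_sdiff] at h3
        exact ⟨h1, h2, h3.1, h3.2⟩
      have hmaps : ∀ t ∈ S, insert t.2.2 (t.1.erase t.2.1) ∈ B := by
        intro t ht
        obtain ⟨htA, hx, hys, hyγ⟩ := hSmem t ht
        obtain ⟨hγs, hγcard, hγ⟩ := hAmem _ htA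
        obtain ⟨hd, he, hf, hxpart, hypart, hpq, hγrec⟩ := aux7 P hparts hγs hγ hx hys hyγ
        rw [hB, Finset.mem_filter, Finset.mem_powersetCard]
        refine ⟨⟨?_, ?_⟩, ?_⟩
        · intro z hz
          rcases Finset.mem_insert.mp hz with rfl | hz
          · exact hys
          · exact hγs (Finset.mem_of_mem_erase hz)
        · rw [Finset.card_insert_of_notMem (fun h => hyγ (Finset.mem_of_mem_erase h)),
            Finset.card_erase_of_mem hx, hγcard]
          omega
        · intro h
          rcases h _ (P.part_mem.2 (hγs hx)) with h' | h'
          · exact hxpart.1 h'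
          · exact hxpart.2 h'
      have hfiber : ∀ δ ∈ B,
          (S.filter (fun t => insert t.2.2 (t.1.erase t.2.1) = δ)).card ≤ 2 := by
        intro δ hδ
        set F := S.filter (fun t => insert t.2.2 (t.1.erase t.2.1) = δ) with hF
        rcases F.eq_empty_or_nonempty with h | ⟨t₀, ht₀⟩
        · rw [h]; simp
        · have key : ∀ t ∈ F,
              (P.part t.2.1 \ δ = {t.2.1}) ∧ (P.part t.2.2 ∩ δ = {t.2.2}) ∧
              (∀ r ∈ P.parts, r ≠ P.part t.2.1 → r ≠ P.part t.2.2 →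
                (r ⊆ δ ∨ Disjoint r δ)) ∧
              (¬ P.part t.2.1 ⊆ δ ∧ ¬ Disjoint (P.part t.2.1) δ) ∧
              (¬ P.part t.2.2 ⊆ δ ∧ ¬ Disjoint (P.part t.2.2) δ) ∧
              P.part t.2.1 ≠ P.part t.2.2 ∧ t.1 = insert t.2.1 (δ.erase t.2.2) ∧
              P.part t.2.1 ∈ P.parts ∧ P.part t.2.2 ∈ P.parts := by
            intro t ht
            rw [hF, Finset.mem_filter] at ht
            obtain ⟨htS, hteq⟩ := ht
            obtain ⟨htA, hx, hys, hyγ⟩ := hSmem t htS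
            obtain ⟨hγs, hγcard, hγ⟩ := hAmem _ htA
            obtain ⟨hd, he, hf, hxpart, hypart, hpq, hγrec⟩ :=
              aux7 P hparts hγs hγ hx hys hyγ
            rw [hteq] at hd he hf hxpart hypart hγrec
            exact ⟨hd, he, hf, hxpart, hypart, hpq, hγrec,
              P.part_mem.2 (hγs hx), P.part_mem.2 hys⟩
          set PP := P.parts.filter (fun r => ¬ r ⊆ δ ∧ ¬ Disjoint r δ) with hPP
          have hFP : F.card ≤ PP.card := by
            apply Finset.card_le_card_of_injOn (fun t => P.part t.2.1)
            · intro t ht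
              obtain ⟨_, _, _, hxpart, _, _, _, hpx, _⟩ := key t ht
              simp only [Finset.mem_coe, hPP, Finset.mem_filter]
              exact ⟨hpx, hxpart⟩
            · intro t₁ ht₁ t₂ ht₂ hpeq
              obtain ⟨hd₁, he₁, hf₁, hx₁, hy₁, hpq₁, hrec₁, hpx₁, hqy₁⟩ := key t₁ ht₁
              obtain ⟨hd₂, he₂, hf₂, hx₂, hy₂, hpq₂, hrec₂, hpx₂, hqy₂⟩ := key t₂ ht₂
              simp only at hpeq
              have hxeq : t₁.2.1 = t₂.2.1 := by
                have hsing : ({t₁.2.1} : Finset α) = {t₂.2.1} := by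
                  rw [← hd₁, hpeq, hd₂]
                exact Finset.singleton_injective hsing
              have hqeq : P.part t₁.2.2 = P.part t₂.2.2 := by
                by_contra hne
                rcases hf₂ _ hqy₁ (by rw [← hpeq]; exact hpq₁.symm) hne with h' | h'
                · exact hy₁.1 h'
                · exact hy₁.2 h'
              have hyeq : t₁.2.2 = t₂.2.2 := by
                have hsing : ({t₁.2.2} : Finset α) = {t₂.2.2} := by
                  rw [← he₁, hqeq, he₂]
                exact Finset.singleton_injective hsing
              have hγeq : t₁.1 = t₂.1 := by rw [hrec₁, hrec₂, hxeq, hyeq]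
              obtain ⟨γ₁, x₁, y₁⟩ := t₁
              obtain ⟨γ₂, x₂, y₂⟩ := t₂
              simp only at hxeq hyeq hγeq
              subst hγeq; subst hxeq; subst hyeq
              rfl
          obtain ⟨hd₀, he₀, hf₀, hx₀, hy₀, hpq₀, hrec₀, hpx₀, hqy₀⟩ := key t₀ ht₀
          have hPP2 : PP.card ≤ 2 := by
            have hsub : PP ⊆ {P.part t₀.2.1, P.part t₀.2.2} := by
              intro r hr
              rw [hPP, Finset.mem_filter] at hr
              rw [Finset.mem_insert, Finset.mem_singleton]
              by_contra h'
              push_neg at h'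
              rcases hf₀ _ hr.1 h'.1 h'.2 with h'' | h''
              · exact hr.2.1 h''
              · exact hr.2.2 h''
            calc PP.card ≤ _ := Finset.card_le_card hsub
              _ ≤ 2 := (Finset.card_insert_le _ _).trans (by simp)
          exact hFP.trans hPP2
      have hS2B : S.card ≤ 2 * B.card :=
        Finset.card_le_mul_card_image_of_maps_to
          (f := fun t => insert t.2.2 (t.1.erase t.2.1)) hmaps 2 hfiber
      obtain ⟨a, ha⟩ := Nat.exists_eq_add_of_le hk₀
      obtain ⟨b, hb⟩ := Nat.exists_eq_add_of_le hk2
      have hineq : 2 * (s.card - 2) ≤ k₀ * (s.card - k₀) := by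
        have h1 : s.card - 2 = k₀ + b := by omega
        have h2 : s.card - k₀ = 2 + b := by omega
        rw [h1, h2, ha]
        nlinarith [Nat.zero_le (a * b)]
      have hmul : A.card * (k₀ * (s.card - k₀)) ≤ 2 * B.card := hScard ▸ hS2B
      have h2' : A.card * (2 * (s.card - 2)) ≤ 2 * B.card :=
        le_trans (Nat.mul_le_mul_left _ hineq) hmul
      have h3 : 2 * (A.card * (s.card - 1)) ≤ 2 * (s.card.choose k₀) := by
        have hσ : s.card - 1 = (s.card - 2) + 1 := by omega
        calc 2 * (A.card * (s.card - 1))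
            = A.card * (2 * (s.card - 2)) + 2 * A.card := by rw [hσ]; ring
          _ ≤ 2 * B.card + 2 * A.card := by omega
          _ = 2 * (s.card.choose k₀) := by omega
      exact Nat.le_of_mul_le_mul_left h3 (by norm_num)
    · -- k₀ = s.card - 1: no unions of parts of this size
      have hA0 : A = ∅ := by
        rw [Finset.eq_empty_iff_forall_notMem]
        intro γ hγA
        obtain ⟨hγs, hγcard, hγ⟩ := hAmem γ hγA
        have hcards : (s \ γ).card = 1 := by
          rw [Finset.card_sdiff_of_subset hγs]; omega
        obtain ⟨z, hz⟩ := Finset.card_eq_one.mp hcards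
        have hzmem : z ∈ s \ γ := by rw [hz]; exact Finset.mem_singleton_self z
        rw [Finset.mem_sdiff] at hzmem
        have hq := P.part_mem.2 hzmem.1
        rcases hγ _ hq with h | h
        · exact hzmem.2 (h (P.mem_part hzmem.1))
        · have hsub : P.part z ⊆ s \ γ := fun w hw =>
            Finset.mem_sdiff.mpr ⟨P.le hq hw, Finset.disjoint_left.mp h hw⟩
          have hcle := Finset.card_le_card hsub
          rw [hcards] at hcle
          have := hparts _ hq
          omega
      rw [hA0]
      simp
end

section
/- Let g be a permutation of a finite set, let C be a cycle of g of length t (identified with the t-element subset of points it permutes), let k₀ be a positive integer with k₀ ≤ t, and let p be a prime dividing t. Suppose γ' is a k₀-element subset of C such that the p-part t_p of t does not divide the length of the orbit of γ' under the induced action of g on k₀-subsets. Then γ' is a union of orbits of the unique subgroup of order p of the cyclic group of order t induced by g on C; in particular, p divides gcd(k₀, t). -/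
private lemma image_pow_iterate {α : Type*} [DecidableEq α] (g : Equiv.Perm α)
    (s : Finset α) (n : ℕ) :
    (fun s : Finset α => s.image g)^[n] s = s.image (g ^ n) := by
  induction n with
  | zero => simp
  | succ n ih =>
      rw [Function.iterate_succ_apply', ih, Finset.image_image, pow_succ']
      rfl

theorem stmt_8 {α : Type*} [Fintype α] [DecidableEq α]
    (g : Equiv.Perm α) (x : α) (C : Finset α) (t k₀ : ℕ) (p : ℕ)
    (hC : C = (g.cycleOf x).support) (ht : C.card = t)
    (hk₀ : 0 < k₀) (hk₀t : k₀ ≤ t) (hp : p.Prime) (hpt : p ∣ t)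
    (γ' : Finset α) (hγ' : γ' ⊆ C) (hcard : γ'.card = k₀)
    (horb : ¬ (p ^ (t.factorization p) ∣
      Function.minimalPeriod (fun s : Finset α => s.image g) γ')) :
    γ'.image (g ^ (t / p)) = γ' ∧ p ∣ Nat.gcd k₀ t := by
  have ht0 : 0 < t := lt_of_lt_of_le hk₀ hk₀t
  -- basic setup about the cycle
  have hCne : C.Nonempty := Finset.card_pos.mp (ht ▸ ht0)
  obtain ⟨a₀, ha₀⟩ := hCne
  have hx : g x ≠ x := by
    rw [hC, Equiv.Perm.mem_support_cycleOf_iff] at ha₀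
    exact Equiv.Perm.mem_support.mp ha₀.2
  have hcyc : (g.cycleOf x).IsCycle := Equiv.Perm.isCycle_cycleOf g hx
  have horder : orderOf (g.cycleOf x) = t := by
    rw [hcyc.orderOf, ← hC, ht]
  -- key pointwise fact
  have key : ∀ a ∈ C, ∀ n : ℕ, (g ^ n) a = a ↔ t ∣ n := by
    intro a ha n
    rw [hC, Equiv.Perm.mem_support_cycleOf_iff] at ha
    have hca : g.cycleOf x = g.cycleOf a := ha.1.cycleOf_eq
    have h1 : ((g.cycleOf x) ^ n) a = (g ^ n) a := by
      rw [hca]; exact Equiv.Perm.cycleOf_pow_apply_self g a n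
    have ha' : a ∈ (g.cycleOf x).support :=
      Equiv.Perm.mem_support_cycleOf_iff.mpr ha
    constructor
    · intro h
      have : (g.cycleOf x) ^ n = 1 := by
        refine hcyc.pow_eq_one_iff.mpr ⟨a, ?_, ?_⟩
        · exact Equiv.Perm.mem_support.mp ha'
        · rw [h1]; exact h
      rw [← horder]
      exact orderOf_dvd_of_pow_eq_one this
    · intro h
      have : (g.cycleOf x) ^ n = 1 := by
        rw [← horder] at h
        exact orderOf_dvd_iff_pow_eq_one.mp h
      rw [← h1, this]; rfl
  -- period divides t
  have hper : Function.IsPeriodicPt (fun s : Finset α => s.image g) t γ' := by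
    show (fun s : Finset α => s.image g)^[t] γ' = γ'
    rw [image_pow_iterate]
    apply Finset.image_congr (g := id) ?_ |>.trans (Finset.image_id)
    intro a ha
    exact (key a (hγ' ha) t).mpr dvd_rfl
  set m := Function.minimalPeriod (fun s : Finset α => s.image g) γ' with hm
  have hmt : m ∣ t := Function.IsPeriodicPt.minimalPeriod_dvd hper
  have hm0 : 0 < m := Function.IsPeriodicPt.minimalPeriod_pos ht0 hper
  -- m divides t / p
  have htp0 : t / p ≠ 0 := by
    have := Nat.le_of_dvd ht0 hpt
    exact Nat.div_ne_zero_iff.mpr ⟨hp.ne_zero, this⟩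
  have hmfp : m.factorization p < t.factorization p := by
    by_contra hcon
    push_neg at hcon
    exact horb ((Nat.Prime.pow_dvd_iff_le_factorization hp hm0.ne').mpr hcon)
  have hmtp : m ∣ t / p := by
    rw [← Nat.factorization_le_iff_dvd hm0.ne' htp0]
    intro q
    have hfd : (t / p).factorization = t.factorization - p.factorization :=
      Nat.factorization_div hpt
    by_cases hq : q = p
    · subst hq
      rw [hfd, Finsupp.tsub_apply, hp.factorization]
      simp only [Finsupp.single_eq_same]
      omega
    · rw [hfd, Finsupp.tsub_apply, hp.factorization,
        Finsupp.single_apply, if_neg (fun h => hq h.symm)]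
      simpa using (Nat.factorization_le_iff_dvd hm0.ne' ht0.ne').mpr hmt q
  -- first conclusion
  obtain ⟨k, hk⟩ := hmtp
  have h1 : γ'.image (g ^ (t / p)) = γ' := by
    have := (Function.isPeriodicPt_minimalPeriod (fun s : Finset α => s.image g) γ').mul_const k
    rw [← hm, ← hk] at this
    have := this
    rw [Function.IsPeriodicPt, Function.IsFixedPt, image_pow_iterate] at this
    exact this
  refine ⟨h1, ?_⟩
  -- p divides k₀
  haveI : Fact p.Prime := ⟨hp⟩
  set h := g ^ (t / p) with hh
  have hnofix : ∀ a ∈ C, h a ≠ a := by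
    intro a ha hfa
    have := (key a ha (t / p)).mp hfa
    have hlt : t / p < t := Nat.div_lt_self ht0 hp.one_lt
    have := Nat.le_of_dvd (Nat.pos_of_ne_zero htp0) this
    omega
  have hppow : ∀ a ∈ C, (h ^ p) a = a := by
    intro a ha
    rw [hh, ← pow_mul]
    exact (key a ha _).mpr ⟨1, by rw [Nat.div_mul_cancel hpt, mul_one]⟩
  have hmemiff : ∀ a : α, a ∈ γ' ↔ h a ∈ γ' := by
    intro a
    constructor
    · intro haγ
      rw [← h1]
      exact Finset.mem_image_of_mem _ haγ
    · intro haγ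
      rw [← h1] at haγ
      obtain ⟨b, hb, hba⟩ := Finset.mem_image.mp haγ
      rwa [← h.injective hba]
  -- restriction of h to γ'
  set σ : Equiv.Perm {y // y ∈ γ'} := h.subtypePerm (fun a => (hmemiff a).symm) with hσ
  have hσp : σ ^ p = 1 := by
    rw [hσ, Equiv.Perm.subtypePerm_pow]
    ext ⟨a, ha⟩
    simp [Equiv.Perm.subtypePerm_apply, hppow a (hγ' ha)]
  have hγne : γ'.Nonempty := Finset.card_pos.mp (hcard ▸ hk₀)
  obtain ⟨b₀, hb₀⟩ := hγne
  have hσne : σ ≠ 1 := by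
    intro hcon
    have : σ ⟨b₀, hb₀⟩ = ⟨b₀, hb₀⟩ := by rw [hcon]; rfl
    have : h b₀ = b₀ := congrArg Subtype.val this
    exact hnofix b₀ (hγ' hb₀) this
  have hord : orderOf σ = p := orderOf_eq_prime hσp hσne
  -- p-group action
  have hpg : IsPGroup p (Subgroup.zpowers σ) :=
    IsPGroup.of_card (n := 1) (by rw [Nat.card_zpowers, hord, pow_one])
  have hmod := hpg.card_modEq_card_fixedPoints {y // y ∈ γ'}
  have hfix : IsEmpty (MulAction.fixedPoints (Subgroup.zpowers σ) {y // y ∈ γ'}) := by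
    constructor
    rintro ⟨⟨a, ha⟩, hfa⟩
    have := hfa ⟨σ, Subgroup.mem_zpowers σ⟩
    have : h a = a := congrArg Subtype.val this
    exact hnofix a (hγ' ha) this
  have hfix0 : Nat.card (MulAction.fixedPoints (Subgroup.zpowers σ) {y // y ∈ γ'}) = 0 :=
    Nat.card_of_isEmpty
  rw [hfix0] at hmod
  have hcardγ : Nat.card {y // y ∈ γ'} = k₀ := by
    rw [Nat.card_eq_fintype_card, Fintype.card_coe, hcard]
  rw [hcardγ] at hmod
  exact Nat.dvd_gcd ((Nat.modEq_zero_iff_dvd).mp hmod) hpt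
end

section
/- Let g be a permutation of a finite set with a cycle C of length t, let k₀ be a positive integer with k₀ ≤ t, and let p be a prime dividing t. Then the number of k₀-element subsets γ' of C such that the p-part t_p of t does not divide the orbit length of γ' under ⟨g⟩ acting on k₀-subsets is at most C(⌊t/2⌋, ⌊k₀/2⌋); in particular it equals 1 if k₀ = t, and is at most C(t, k₀)/(t-1) if k₀ < t. -/
lemma aux_nt {p t d : ℕ} (hp : p.Prime) (hpt : p ∣ t) (ht : t ≠ 0) (hd : d ∣ t) (hd0 : d ≠ 0) :
    (¬ p ^ (t.factorization p) ∣ d) ↔ d ∣ t / p := by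
  have htp : t / p ≠ 0 := (Nat.div_pos (Nat.le_of_dvd (Nat.pos_of_ne_zero ht) hpt) hp.pos).ne'
  have hν : 0 < t.factorization p := hp.factorization_pos_of_dvd ht hpt
  constructor
  · intro h
    rw [hp.pow_dvd_iff_le_factorization hd0, not_le] at h
    rw [← Nat.factorization_le_iff_dvd hd0 htp, Nat.factorization_div hpt]
    rw [Finsupp.le_def]
    intro q
    have hdt : d.factorization ≤ t.factorization := (Nat.factorization_le_iff_dvd hd0 ht).mpr hd
    have hdtq := hdt q
    rw [Finsupp.tsub_apply, hp.factorization]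
    rcases eq_or_ne p q with rfl | hq
    · rw [Finsupp.single_eq_same]; omega
    · rw [Finsupp.single_eq_of_ne' hq]; omega
  · intro h hdvd
    have h1 := ((Nat.factorization_le_iff_dvd hd0 htp).mpr h) p
    have h2 : t.factorization p ≤ d.factorization p := (hp.pow_dvd_iff_le_factorization hd0).mp hdvd
    rw [Nat.factorization_div hpt, Finsupp.tsub_apply, hp.factorization,
      Finsupp.single_eq_same] at h1
    omega

lemma aux_le_choose : ∀ (n k : ℕ), 1 ≤ k → k < n → n ≤ n.choose k := by
  intro n
  induction n with
  | zero => intro k h1 h2; omega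
  | succ n ih =>
    intro k h1 h2
    rcases eq_or_lt_of_le (Nat.lt_succ_iff.mp h2) with rfl | hlt
    · rw [Nat.choose_succ_self_right]
    · obtain ⟨j, rfl⟩ : ∃ j, k = j + 1 := ⟨k - 1, by omega⟩
      rw [Nat.choose_succ_succ]
      simp only [Nat.succ_eq_add_one]
      rcases Nat.eq_zero_or_pos j with rfl | hj
      · simp
      · have hih : n ≤ n.choose (j+1) := ih (j+1) h1 hlt
        have hpos : 0 < n.choose j := Nat.choose_pos (by omega)
        omega

lemma aux_desc : ∀ (q k n : ℕ), q ≤ k → k ≤ n →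
    n.choose k * ∏ j ∈ Finset.range q, (k - j) =
    (n - q).choose (k - q) * ∏ j ∈ Finset.range q, (n - j) := by
  intro q
  induction q with
  | zero => simp
  | succ q ih =>
    intro k n hq hk
    rw [Finset.prod_range_succ, Finset.prod_range_succ, ← mul_assoc, ← mul_assoc,
      ih k n (by omega) hk]
    have key : (n - q) * (n - (q+1)).choose (k - (q+1)) = (n-q).choose (k-q) * (k - q) := by
      have h1 : n - q = (n - (q+1)) + 1 := by omega
      have h2 : k - q = (k - (q+1)) + 1 := by omega
      rw [h1, h2]
      simpa using Nat.add_one_mul_choose_eq (n - (q+1)) (k - (q+1))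
    rw [mul_right_comm, ← key, mul_comm (n - q) ((n - (q+1)).choose (k - (q+1))), mul_assoc,
      mul_comm (n - q) (∏ j ∈ Finset.range q, (n - j)), ← mul_assoc]

lemma aux_key_ineq {p : ℕ} (hp : 2 ≤ p) : ∀ (b m : ℕ), 1 ≤ b → b < m →
    (p * m - 1) * m.choose b ≤ (p * m).choose (p * b) := by
  obtain ⟨r, rfl⟩ : ∃ r, p = r + 2 := ⟨p - 2, by omega⟩
  intro b
  induction b with
  | zero => intro m h1 h2; omega
  | succ b ih =>
    intro m hb1 hbm
    obtain ⟨m', rfl⟩ : ∃ m', m = m' + 1 := ⟨m - 1, by omega⟩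
    rcases Nat.eq_zero_or_pos b with rfl | hb
    · -- base case b + 1 = 1
      have hm : 2 ≤ m' + 1 := by omega
      set M := (r + 2) * (m' + 1) with hM
      have hMge : (r + 2) * 2 ≤ M := by rw [hM]; exact Nat.mul_le_mul_left _ hm
      have e1 : M * (M - 1).choose (r + 1) = M.choose (r + 2) * (r + 2) := by
        have h1 : M = M - 1 + 1 := by omega
        rw [h1, Nat.add_sub_cancel]
        simpa using Nat.add_one_mul_choose_eq (M - 1) (r + 1)
      have e2 : M - 1 ≤ (M - 1).choose (r + 1) := by
        apply aux_le_choose _ _ (by omega)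
        omega
      have h3 : (M - 1) * (m' + 1).choose 1 * (r + 2) ≤ M.choose ((r + 2) * 1) * (r + 2) := by
        rw [Nat.choose_one_right, mul_one, ← e1]
        calc (M - 1) * (m' + 1) * (r + 2) = ((m' + 1) * (r + 2)) * (M - 1) := by ring
          _ = M * (M - 1) := by rw [hM]; ring
          _ ≤ M * (M - 1).choose (r + 1) := Nat.mul_le_mul_left _ e2
      exact Nat.le_of_mul_le_mul_right h3 (by omega)
    · -- inductive step, 1 ≤ b < m'
      have hIH := ih m' hb (by omega)
      set M := (r + 2) * (m' + 1) with hM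
      set K := (r + 2) * (b + 1) with hK
      have hMK : K + (r + 2) ≤ M := by
        have h1 : (r + 2) * (b + 2) = (r + 2) * (b + 1) + (r + 2) := by ring
        have h2 : (r + 2) * (b + 2) ≤ (r + 2) * (m' + 1) := Nat.mul_le_mul_left _ (by omega)
        omega
      have hMp : M - (r + 2) = (r + 2) * m' := by
        have : M = (r + 2) * m' + (r + 2) := by rw [hM]; ring
        omega
      have hKp : K - (r + 2) = (r + 2) * b := by
        have : K = (r + 2) * b + (r + 2) := by rw [hK]; ring
        omega
      have hKpos : (r + 2) ≤ K := by
        rw [hK]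
        exact Nat.le_mul_of_pos_right _ (by omega)
      have hdesc : M.choose K * ∏ j ∈ Finset.range (r + 2), (K - j) =
          ((r + 2) * m').choose ((r + 2) * b) * ∏ j ∈ Finset.range (r + 2), (M - j) := by
        rw [aux_desc (r + 2) K M hKpos (by omega), hMp, hKp]
      have e_split_b : ∏ j ∈ Finset.range (r + 2), (K - j) =
          (∏ j ∈ Finset.range (r + 1), (K - (j + 1))) * K := by
        rw [Finset.prod_range_succ']
        simp
      have e_split_m : ∏ j ∈ Finset.range (r + 2), (M - j) =
          (∏ j ∈ Finset.range (r + 1), (M - (j + 1))) * M := by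
        rw [Finset.prod_range_succ']
        simp
      have pointwise : (M - 1) * ∏ j ∈ Finset.range (r + 1), (K - (j + 1)) ≤
          ((r + 2) * m' - 1) * ∏ j ∈ Finset.range (r + 1), (M - (j + 1)) := by
        have hL : (M - 1) * ∏ j ∈ Finset.range (r + 1), (K - (j + 1)) =
            ∏ j ∈ Finset.range (r + 2), (if j = 0 then M - 1 else K - j) := by
          conv_rhs => rw [Finset.prod_range_succ']
          simp only [if_pos rfl]
          rw [mul_comm]
          congr 1
        have hR : ((r + 2) * m' - 1) * ∏ j ∈ Finset.range (r + 1), (M - (j + 1)) =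
            ∏ j ∈ Finset.range (r + 2), (if j = r + 1 then (r + 2) * m' - 1 else M - (j + 1)) := by
          conv_rhs => rw [Finset.prod_range_succ]
          simp only [if_pos rfl]
          rw [mul_comm]
          congr 1
          apply Finset.prod_congr rfl
          intro j hj
          rw [if_neg (by simp at hj; omega)]
        rw [hL, hR]
        apply Finset.prod_le_prod (fun i _ => Nat.zero_le _)
        intro j hj
        simp only [Finset.mem_range] at hj
        have hj2 : M - (r + 2) = (r + 2) * m' := hMp
        split_ifs <;> omega
      have hPbpos : 0 < ∏ j ∈ Finset.range (r + 2), (K - j) :=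
        Finset.prod_pos (fun j hj => by simp only [Finset.mem_range] at hj; omega)
      have hmb : (m' + 1) * m'.choose b = (m' + 1).choose (b + 1) * (b + 1) := by
        simpa using Nat.add_one_mul_choose_eq m' b
      apply Nat.le_of_mul_le_mul_right (c := ∏ j ∈ Finset.range (r + 2), (K - j)) _ hPbpos
      set Qb := ∏ j ∈ Finset.range (r + 1), (K - (j + 1)) with hQb
      set Qm := ∏ j ∈ Finset.range (r + 1), (M - (j + 1)) with hQm
      calc (M - 1) * (m' + 1).choose (b + 1) * ∏ j ∈ Finset.range (r + 2), (K - j)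
          = (M - 1) * (m' + 1).choose (b + 1) * (Qb * K) := by rw [e_split_b]
        _ = ((M - 1) * Qb) * (((m' + 1).choose (b + 1) * (b + 1)) * (r + 2)) := by
            rw [hK]; ring
        _ = ((M - 1) * Qb) * (((m' + 1) * m'.choose b) * (r + 2)) := by rw [hmb]
        _ = ((M - 1) * Qb) * (m'.choose b * M) := by rw [hM]; ring
        _ ≤ (((r + 2) * m' - 1) * Qm) * (m'.choose b * M) :=
            Nat.mul_le_mul_right _ pointwise
        _ = (((r + 2) * m' - 1) * m'.choose b) * (Qm * M) := by ring
        _ ≤ ((r + 2) * m').choose ((r + 2) * b) * (Qm * M) := Nat.mul_le_mul_right _ hIH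
        _ = ((r + 2) * m').choose ((r + 2) * b) * ∏ j ∈ Finset.range (r + 2), (M - j) := by
            rw [e_split_m]
        _ = M.choose K * ∏ j ∈ Finset.range (r + 2), (K - j) := hdesc.symm


lemma aux_choose_mono {a b a' b' : ℕ} (hb : b ≤ b') (hba : b ≤ a) (hb'a' : b' ≤ a')
    (hsub : a - b ≤ a' - b') : a.choose b ≤ a'.choose b' := by
  obtain ⟨r, rfl⟩ : ∃ r, a = b + r := ⟨a - b, by omega⟩
  obtain ⟨r', rfl⟩ : ∃ r', a' = b' + r' := ⟨a' - b', by omega⟩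
  have hrr' : r ≤ r' := by omega
  calc (b + r).choose b = (b + r).choose r := by
        rw [← Nat.choose_symm (by omega : b ≤ b + r)]
        congr 1
        omega
    _ ≤ (b' + r).choose r := Nat.choose_le_choose r (by omega)
    _ = (b' + r).choose b' := by
        rw [← Nat.choose_symm (by omega : r ≤ b' + r)]
        congr 1
        omega
    _ ≤ (b' + r').choose b' := Nat.choose_le_choose b' (by omega)

lemma aux_part1 {p t k₀ : ℕ} (hp : 2 ≤ p) (hpt : p ∣ t) (hpk : p ∣ k₀) (hk : k₀ ≤ t) :
    (t / p).choose (k₀ / p) ≤ (t / 2).choose (k₀ / 2) := by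
  apply aux_choose_mono
  · exact Nat.div_le_div_left hp (by omega)
  · exact Nat.div_le_div_right hk
  · exact Nat.div_le_div_right hk
  · obtain ⟨m, rfl⟩ := hpt
    obtain ⟨b, rfl⟩ := hpk
    rw [Nat.mul_div_cancel_left _ (by omega : 0 < p), Nat.mul_div_cancel_left _ (by omega : 0 < p)]
    have hbm : b ≤ m := Nat.le_of_mul_le_mul_left hk (by omega)
    have h2 : (p * b) / 2 + (m - b) ≤ (p * m) / 2 := by
      rw [Nat.le_div_iff_mul_le (by omega : 0 < 2)]
      have hd := Nat.div_mul_le_self (p * b) 2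
      have h3 : (m - b) * 2 ≤ (m - b) * p := Nat.mul_le_mul_left _ hp
      have h4 : p * b + (m - b) * p = p * m := by
        have : (m - b) * p = p * (m - b) := mul_comm _ _
        rw [this, ← Nat.mul_add]
        congr 1
        omega
      omega
    omega

theorem stmt_9 {α : Type*} [Fintype α] [DecidableEq α]
    (g : Equiv.Perm α) (x : α) (C : Finset α) (t k₀ : ℕ) (p : ℕ)
    (hC : C = (g.cycleOf x).support) (ht : C.card = t)
    (hk₀ : 0 < k₀) (hk₀t : k₀ ≤ t) (hp : p.Prime) (hpt : p ∣ t) :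
    (((C.powersetCard k₀).filter
        (fun γ' => ¬ (p ^ (t.factorization p) ∣
          Function.minimalPeriod (fun s : Finset α => s.image g) γ'))).card ≤
      (t / 2).choose (k₀ / 2)) ∧
    (k₀ = t →
      ((C.powersetCard k₀).filter
        (fun γ' => ¬ (p ^ (t.factorization p) ∣
          Function.minimalPeriod (fun s : Finset α => s.image g) γ'))).card = 1) ∧
    (k₀ < t →
      ((((C.powersetCard k₀).filter
        (fun γ' => ¬ (p ^ (t.factorization p) ∣
          Function.minimalPeriod (fun s : Finset α => s.image g) γ'))).card : ℝ) ≤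
        (t.choose k₀ : ℝ) / ((t : ℝ) - 1))) := by
  subst hC
  have ht0 : t ≠ 0 := by omega
  have hp2 : 2 ≤ p := hp.two_le
  have htp2 : 2 ≤ t := le_trans hp2 (Nat.le_of_dvd (by omega) hpt)
  set s : Finset α := (g.cycleOf x).support with hs
  have hgx : g x ≠ x := by
    intro h
    have h1 : s = ∅ := by
      rw [hs, (Equiv.Perm.cycleOf_eq_one_iff g).mpr h, Equiv.Perm.support_one]
    rw [h1] at ht
    simp at ht
    omega
  have hxs : x ∈ s := by
    rw [hs, Equiv.Perm.mem_support_cycleOf_iff]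
    exact ⟨Equiv.Perm.SameCycle.refl g x, Equiv.Perm.mem_support.mpr hgx⟩
  have hcyc : g.IsCycleOn ((s : Finset α) : Set α) := g.isCycleOn_support_cycleOf x
  set m := t / p with hm
  have hpm : p * m = t := Nat.mul_div_cancel' hpt
  have hm1 : 1 ≤ m := by
    rcases Nat.eq_zero_or_pos m with h | h
    · rw [h, mul_zero] at hpm; omega
    · exact h
  have F1 : ∀ y ∈ s, ∀ n : ℕ, (g ^ n) y = y ↔ t ∣ n := by
    intro y hy n
    rw [← ht]
    exact hcyc.pow_apply_eq hy
  have F2 : ∀ y ∈ s, ∃ n, n < t ∧ (g ^ n) x = y := by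
    intro y hy
    obtain ⟨n, hn, h⟩ := hcyc.exists_pow_eq hxs hy
    exact ⟨n, ht ▸ hn, h⟩
  have F3 : ∀ i j : ℕ, ((g ^ i) x = (g ^ j) x ↔ i ≡ j [MOD t]) := by
    intro i j
    rw [← ht]
    exact hcyc.pow_apply_eq_pow_apply hxs
  have F4 : ∀ (n : ℕ), ∀ y ∈ s, (g ^ n) y ∈ s := by
    intro n y hy
    rw [hs, Equiv.Perm.mem_support_cycleOf_iff] at hy ⊢
    exact ⟨Equiv.Perm.sameCycle_pow_right.mpr hy.1, hy.2⟩
  have hiter : ∀ (n : ℕ) (u : Finset α), (fun v : Finset α => v.image g)^[n] u = u.image ⇑(g ^ n) := by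
    intro n
    induction n with
    | zero => intro u; simp
    | succ n ih =>
      intro u
      rw [Function.iterate_succ_apply', ih]
      show (u.image ⇑(g ^ n)).image ⇑g = u.image ⇑(g ^ (n + 1))
      rw [Finset.image_image, pow_succ', Equiv.Perm.coe_mul]
  have hpred : ∀ γ' ∈ s.powersetCard k₀,
      ((¬ (p ^ (t.factorization p) ∣
          Function.minimalPeriod (fun v : Finset α => v.image g) γ')) ↔
        γ'.image ⇑(g ^ m) = γ') := by
    intro γ' hγ'
    rw [Finset.mem_powersetCard] at hγ'
    have hsub := hγ'.1
    have hper : Function.IsPeriodicPt (fun v : Finset α => v.image g) t γ' := by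
      show (fun v : Finset α => v.image g)^[t] γ' = γ'
      rw [hiter]
      calc γ'.image ⇑(g ^ t) = γ'.image id :=
            Finset.image_congr (fun y hy => (F1 y (hsub hy) t).mpr dvd_rfl)
        _ = γ' := Finset.image_id
    have hdvd : Function.minimalPeriod (fun v : Finset α => v.image g) γ' ∣ t :=
      hper.minimalPeriod_dvd
    have hd0 : Function.minimalPeriod (fun v : Finset α => v.image g) γ' ≠ 0 :=
      (hper.minimalPeriod_pos (by omega)).ne'
    rw [aux_nt hp hpt ht0 hdvd hd0]
    constructor
    · intro h
      have h2 : Function.IsPeriodicPt (fun v : Finset α => v.image g) m γ' :=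
        Function.isPeriodicPt_iff_minimalPeriod_dvd.mpr h
      have h3 : (fun v : Finset α => v.image g)^[m] γ' = γ' := h2
      rwa [hiter] at h3
    · intro h
      apply Function.IsPeriodicPt.minimalPeriod_dvd
      show (fun v : Finset α => v.image g)^[m] γ' = γ'
      rw [hiter]
      exact h
  have hfilt : (s.powersetCard k₀).filter
      (fun γ' => ¬ (p ^ (t.factorization p) ∣
        Function.minimalPeriod (fun v : Finset α => v.image g) γ')) =
      (s.powersetCard k₀).filter (fun γ' => γ'.image ⇑(g ^ m) = γ') :=
    Finset.filter_congr hpred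
  rw [hfilt]
  set T := (s.powersetCard k₀).filter (fun γ' => γ'.image ⇑(g ^ m) = γ') with hT
  have hQ1 : ∀ γ' : Finset α, γ'.image ⇑(g ^ m) = γ' → ∀ y, (y ∈ γ' ↔ (g ^ m) y ∈ γ') := by
    intro γ' hinv y
    constructor
    · intro hy
      rw [← hinv]
      exact Finset.mem_image_of_mem _ hy
    · intro hy
      rw [← hinv] at hy
      obtain ⟨z, hz, hzy⟩ := Finset.mem_image.mp hy
      have hzy' : z = y := (g ^ m).injective hzy
      rwa [← hzy']
  have hQ : ∀ γ' : Finset α, γ'.image ⇑(g ^ m) = γ' →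
      ∀ (j : ℕ) (y : α), (y ∈ γ' ↔ (g ^ (j * m)) y ∈ γ') := by
    intro γ' hinv j
    induction j with
    | zero => intro y; simp
    | succ j ih =>
      intro y
      have he : (g ^ ((j + 1) * m)) y = (g ^ (j * m)) ((g ^ m) y) := by
        rw [show (j + 1) * m = j * m + m from by ring, pow_add]
        rfl
      rw [he, ← ih ((g ^ m) y)]
      exact hQ1 γ' hinv y
  have hres : ∀ γ' : Finset α, γ'.image ⇑(g ^ m) = γ' →
      ∀ i : ℕ, ((g ^ i) x ∈ γ' ↔ (g ^ (i % m)) x ∈ γ') := by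
    intro γ' hinv i
    obtain ⟨q, r, hrm, rfl⟩ : ∃ q r, r < m ∧ i = q * m + r :=
      ⟨i / m, i % m, Nat.mod_lt _ (by omega), (Nat.div_add_mod' i m).symm⟩
    have hmod : (q * m + r) % m = r := by
      rw [show q * m + r = r + m * q from by ring, Nat.add_mul_mod_self_left,
        Nat.mod_eq_of_lt hrm]
    rw [hmod]
    have he : (g ^ (q * m + r)) x = (g ^ (q * m)) ((g ^ r) x) := by
      rw [pow_add]
      rfl
    rw [he]
    exact (hQ γ' hinv q ((g ^ r) x)).symm
  set φ : Finset α → Finset ℕ := fun γ' => (Finset.range m).filter (fun i => (g ^ i) x ∈ γ')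
    with hφ
  have hA : ∀ γ' : Finset α, γ' ⊆ s → γ'.image ⇑(g ^ m) = γ' → γ'.card = (φ γ').card * p := by
    intro γ' hsub hinv
    have hdecomp : γ' = (φ γ').biUnion
        (fun r => (Finset.range p).image (fun j => (g ^ (j * m + r)) x)) := by
      ext y
      simp only [Finset.mem_biUnion, Finset.mem_image, Finset.mem_range, hφ, Finset.mem_filter]
      constructor
      · intro hy
        obtain ⟨i, hi, hix⟩ := F2 y (hsub hy)
        refine ⟨i % m, ⟨Nat.mod_lt _ (by omega), ?_⟩, ⟨i / m, ?_, ?_⟩⟩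
        · exact (hres γ' hinv i).mp (by rw [hix]; exact hy)
        · rw [Nat.div_lt_iff_lt_mul (by omega : 0 < m)]
          omega
        · rw [Nat.div_add_mod']
          exact hix
      · rintro ⟨r, ⟨hr, hrx⟩, ⟨j, hj, rfl⟩⟩
        have he : (g ^ (j * m + r)) x = (g ^ (j * m)) ((g ^ r) x) := by
          rw [pow_add]
          rfl
        rw [he]
        exact (hQ γ' hinv j _).mp hrx
    have hltt : ∀ j r : ℕ, j < p → r < m → j * m + r < t := by
      intro j r hj hr
      have e1 : (j + 1) * m = j * m + m := by ring
      have e2 : (j + 1) * m ≤ p * m := Nat.mul_le_mul_right _ (by omega)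
      omega
    have hcardblock : ∀ r ∈ φ γ',
        ((Finset.range p).image (fun j => (g ^ (j * m + r)) x)).card = p := by
      intro r hr
      have hrm : r < m := by
        rw [hφ] at hr
        simp only [Finset.mem_filter, Finset.mem_range] at hr
        exact hr.1
      rw [Finset.card_image_of_injOn, Finset.card_range]
      intro j1 h1 j2 h2 he
      simp only [Finset.coe_range, Set.mem_Iio] at h1 h2
      have hmod := (F3 _ _).mp he
      have hlt1 : j1 * m + r < t := hltt j1 r h1 hrm
      have hlt2 : j2 * m + r < t := hltt j2 r h2 hrm
      have heq : j1 * m + r = j2 * m + r := by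
        rw [Nat.ModEq] at hmod
        rwa [Nat.mod_eq_of_lt hlt1, Nat.mod_eq_of_lt hlt2] at hmod
      have hjj : j1 * m = j2 * m := by omega
      exact Nat.eq_of_mul_eq_mul_right (by omega) hjj
    have hdisj : ∀ r1 ∈ φ γ', ∀ r2 ∈ φ γ', r1 ≠ r2 →
        Disjoint ((Finset.range p).image (fun j => (g ^ (j * m + r1)) x))
          ((Finset.range p).image (fun j => (g ^ (j * m + r2)) x)) := by
      intro r1 hr1 r2 hr2 hne
      have hrm1 : r1 < m := by
        rw [hφ] at hr1
        simp only [Finset.mem_filter, Finset.mem_range] at hr1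
        exact hr1.1
      have hrm2 : r2 < m := by
        rw [hφ] at hr2
        simp only [Finset.mem_filter, Finset.mem_range] at hr2
        exact hr2.1
      rw [Finset.disjoint_left]
      intro a ha1 ha2
      simp only [Finset.mem_image, Finset.mem_range] at ha1 ha2
      obtain ⟨j1, hj1, he1⟩ := ha1
      obtain ⟨j2, hj2, he2⟩ := ha2
      have he : (g ^ (j1 * m + r1)) x = (g ^ (j2 * m + r2)) x := by rw [he1, he2]
      have hmod := (F3 _ _).mp he
      have hlt1 : j1 * m + r1 < t := hltt j1 r1 hj1 hrm1
      have hlt2 : j2 * m + r2 < t := hltt j2 r2 hj2 hrm2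
      have heq : j1 * m + r1 = j2 * m + r2 := by
        rw [Nat.ModEq] at hmod
        rwa [Nat.mod_eq_of_lt hlt1, Nat.mod_eq_of_lt hlt2] at hmod
      apply hne
      have e1 : (j1 * m + r1) % m = r1 := by
        rw [show j1 * m + r1 = r1 + m * j1 from by ring, Nat.add_mul_mod_self_left,
          Nat.mod_eq_of_lt hrm1]
      have e2 : (j2 * m + r2) % m = r2 := by
        rw [show j2 * m + r2 = r2 + m * j2 from by ring, Nat.add_mul_mod_self_left,
          Nat.mod_eq_of_lt hrm2]
      rw [← e1, ← e2, heq]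
    calc γ'.card = ((φ γ').biUnion
          (fun r => (Finset.range p).image (fun j => (g ^ (j * m + r)) x))).card := by
          rw [← hdecomp]
      _ = ∑ r ∈ φ γ', ((Finset.range p).image (fun j => (g ^ (j * m + r)) x)).card :=
          Finset.card_biUnion hdisj
      _ = ∑ _r ∈ φ γ', p := Finset.sum_congr rfl hcardblock
      _ = (φ γ').card * p := by rw [Finset.sum_const, smul_eq_mul]
  have hB : ∀ γ₁ γ₂ : Finset α, γ₁ ⊆ s → γ₂ ⊆ s →
      γ₁.image ⇑(g ^ m) = γ₁ → γ₂.image ⇑(g ^ m) = γ₂ → φ γ₁ = φ γ₂ → γ₁ = γ₂ := by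
    have hsub : ∀ γ₁ γ₂ : Finset α, γ₁ ⊆ s →
        γ₁.image ⇑(g ^ m) = γ₁ → γ₂.image ⇑(g ^ m) = γ₂ → φ γ₁ = φ γ₂ → γ₁ ⊆ γ₂ := by
      intro γ₁ γ₂ h1 hi1 hi2 hphi y hy
      obtain ⟨i, hi, rfl⟩ := F2 y (h1 hy)
      have hr : i % m ∈ φ γ₁ := by
        rw [hφ]
        simp only [Finset.mem_filter, Finset.mem_range]
        exact ⟨Nat.mod_lt _ (by omega), (hres γ₁ hi1 i).mp hy⟩
      rw [hphi, hφ] at hr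
      simp only [Finset.mem_filter, Finset.mem_range] at hr
      exact (hres γ₂ hi2 i).mpr hr.2
    intro γ₁ γ₂ h1 h2 hi1 hi2 hphi
    exact subset_antisymm (hsub γ₁ γ₂ h1 hi1 hi2 hphi) (hsub γ₂ γ₁ h2 hi2 hi1 hphi.symm)
  have hTmem : ∀ γ' ∈ T, γ' ⊆ s ∧ γ'.card = k₀ ∧ γ'.image ⇑(g ^ m) = γ' := by
    intro γ' hγ'
    rw [hT, Finset.mem_filter, Finset.mem_powersetCard] at hγ'
    exact ⟨hγ'.1.1, hγ'.1.2, hγ'.2⟩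
  have main_bound : T.card ≤ m.choose (k₀ / p) := by
    have hcardφ : ∀ γ' ∈ T, (φ γ').card = k₀ / p := by
      intro γ' hγ'
      obtain ⟨h1, h2, h3⟩ := hTmem γ' hγ'
      have h4 := hA γ' h1 h3
      rw [h2] at h4
      rw [h4, Nat.mul_div_cancel _ (by omega : 0 < p)]
    calc T.card ≤ ((Finset.range m).powersetCard (k₀ / p)).card := by
          apply Finset.card_le_card_of_injOn φ
          · intro γ' hγ'
            rw [Finset.mem_coe, Finset.mem_powersetCard]
            exact ⟨Finset.filter_subset _ _, hcardφ γ' hγ'⟩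
          · intro γ₁ h1 γ₂ h2 hphi
            obtain ⟨a1, b1, c1⟩ := hTmem γ₁ (Finset.mem_coe.mp h1)
            obtain ⟨a2, b2, c2⟩ := hTmem γ₂ (Finset.mem_coe.mp h2)
            exact hB γ₁ γ₂ a1 a2 c1 c2 hphi
      _ = m.choose (k₀ / p) := by rw [Finset.card_powersetCard, Finset.card_range]
  have hempty : ¬ p ∣ k₀ → T.card = 0 := by
    intro hpk
    rcases Finset.eq_empty_or_nonempty T with hE | ⟨γ₀, hγ₀⟩
    · rw [hE, Finset.card_empty]
    · exfalso
      obtain ⟨h0s, h0c, h0i⟩ := hTmem γ₀ hγ₀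
      exact hpk ⟨(φ γ₀).card, by rw [← h0c, hA γ₀ h0s h0i]; ring⟩
  refine ⟨?_, ?_, ?_⟩
  · by_cases hpk : p ∣ k₀
    · calc T.card ≤ m.choose (k₀ / p) := main_bound
        _ ≤ (t / 2).choose (k₀ / 2) := by
            rw [hm]
            exact aux_part1 hp2 hpt hpk hk₀t
    · rw [hempty hpk]
      exact Nat.zero_le _
  · intro hkt
    have himg : s.image ⇑(g ^ m) = s := by
      apply Finset.eq_of_subset_of_card_le
      · intro y hy
        obtain ⟨z, hz, rfl⟩ := Finset.mem_image.mp hy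
        exact F4 m z hz
      · rw [Finset.card_image_of_injective _ (g ^ m).injective]
    have hTs : T = {s} := by
      rw [hT, hkt, ← ht, Finset.powersetCard_self, Finset.filter_singleton, if_pos himg]
    rw [hTs, Finset.card_singleton]
  · intro hkt
    by_cases hpk : p ∣ k₀
    · have hb1 : 1 ≤ k₀ / p := (Nat.one_le_div_iff hp.pos).mpr (Nat.le_of_dvd (by omega) hpk)
      have hbm : k₀ / p < m := by
        obtain ⟨b', rfl⟩ := hpk
        rw [Nat.mul_div_cancel_left _ (by omega : 0 < p)]
        have hlt : p * b' < p * m := by omega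
        exact Nat.lt_of_mul_lt_mul_left hlt
      have hkey := aux_key_ineq hp2 (k₀ / p) m hb1 hbm
      rw [hpm, Nat.mul_div_cancel' hpk] at hkey
      have hfin : T.card * (t - 1) ≤ t.choose k₀ := by
        calc T.card * (t - 1) ≤ m.choose (k₀ / p) * (t - 1) :=
              Nat.mul_le_mul_right _ main_bound
          _ = (t - 1) * m.choose (k₀ / p) := mul_comm _ _
          _ ≤ t.choose k₀ := hkey
      rw [le_div_iff₀ (by
        have h2 : (2 : ℝ) ≤ (t : ℝ) := by exact_mod_cast htp2
        linarith)]
      calc (T.card : ℝ) * ((t : ℝ) - 1) = ((T.card * (t - 1) : ℕ) : ℝ) := by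
            push_cast [Nat.cast_sub (by omega : 1 ≤ t)]
            ring
        _ ≤ (t.choose k₀ : ℝ) := Nat.cast_le.mpr hfin
    · rw [hempty hpk]
      rw [Nat.cast_zero]
      apply div_nonneg (Nat.cast_nonneg _)
      have h2 : (2 : ℝ) ≤ (t : ℝ) := by exact_mod_cast htp2
      linarith
end

section
/- Let a, c be real numbers and n a positive integer with n > a > c + 2 ≥ 3, and let t, ℓ be positive integers with t ≥ 2 and t ≥ ℓ. Then the sum of x^t/(x-c)^ℓ over integers x with a < x ≤ n is strictly less than Σ_{i=0}^{ℓ-2} C(t,i)·c^{t-i}·(a-1-c)^{i+1-ℓ}/(ℓ-i-1) + C(t,ℓ-1)·c^{t+1-ℓ}·log(n) + Σ_{i=ℓ}^{t} C(t,i)·c^{t-i}·(n+1-c)^{i+1-ℓ}/(i+1-ℓ). -/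
lemma tele (f : ℤ → ℝ) (m n : ℤ) (h : m ≤ n) :
    ∑ x ∈ Finset.Icc (m+1) n, (f x - f (x-1)) = f n - f m := by
  set N := (n - m).toNat with hN
  have hnm : n = m + N := by omega
  have hreindex : ∑ x ∈ Finset.Icc (m+1) n, (f x - f (x-1))
      = ∑ i ∈ Finset.range N, (f (m + (i+1)) - f (m + i)) := by
    apply Finset.sum_nbij' (i := fun x => (x - (m+1)).toNat) (j := fun i => m + 1 + i)
    · intro x hx; simp only [Finset.mem_Icc] at hx; simp only [Finset.mem_range]; omega
    · intro i hi; simp only [Finset.mem_range] at hi; simp only [Finset.mem_Icc]; omega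
    · intro x hx; simp only [Finset.mem_Icc] at hx; omega
    · intro i hi; simp only [Finset.mem_range] at hi; omega
    · intro x hx
      simp only [Finset.mem_Icc] at hx
      congr 2 <;> push_cast <;> omega
  rw [hreindex]
  have h2 := Finset.sum_range_sub (fun i : ℕ => f (m + i)) N
  push_cast at h2 ⊢
  rw [h2, hnm]
  norm_num

lemma sum_le_tele (f g : ℤ → ℝ) (m n : ℤ) (h : m ≤ n)
    (hg : ∀ x, m + 1 ≤ x → x ≤ n → g x ≤ f x - f (x-1)) :
    ∑ x ∈ Finset.Icc (m+1) n, g x ≤ f n - f m := by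
  rw [← tele f m n h]
  exact Finset.sum_le_sum (fun x hx => by
    simp only [Finset.mem_Icc] at hx; exact hg x hx.1 hx.2)

lemma lemA (p : ℝ) (hp : 0 < p) (k : ℕ) :
    ((k : ℝ) + 1) * p ^ k ≤ (p+1) ^ (k+1) - p ^ (k+1) := by
  have hg := geom_sum₂_mul (p+1) p (k+1)
  simp only [add_sub_cancel_left, mul_one] at hg
  rw [← hg]
  calc ((k:ℝ)+1) * p ^ k = ∑ _i ∈ Finset.range (k+1), p ^ k := by
        rw [Finset.sum_const, Finset.card_range, nsmul_eq_mul]; push_cast; ring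
    _ ≤ ∑ i ∈ Finset.range (k+1), (p+1) ^ i * p ^ (k + 1 - 1 - i) := by
        apply Finset.sum_le_sum
        intro i hi
        simp only [Finset.mem_range] at hi
        rw [show k + 1 - 1 - i = k - i from by omega]
        calc p ^ k = p ^ i * p ^ (k - i) := by
              rw [← pow_add, show i + (k - i) = k from by omega]
          _ ≤ (p+1) ^ i * p ^ (k - i) := by gcongr; linarith

lemma lemB (p : ℝ) (hp : 0 < p) (j : ℕ) :
    (j : ℝ) * ((p+1) ^ (j+1))⁻¹ ≤ (p ^ j)⁻¹ - ((p+1) ^ j)⁻¹ := by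
  have hp1 : (0:ℝ) < p + 1 := by linarith
  have key : (j : ℝ) * (p ^ j * (p+1) ^ j) ≤ ((p+1) ^ j - p ^ j) * (p+1) ^ (j+1) := by
    have hg := geom_sum₂_mul (p+1) p j
    simp only [add_sub_cancel_left, mul_one] at hg
    rw [← hg, Finset.sum_mul]
    calc (j : ℝ) * (p ^ j * (p+1) ^ j) = ∑ _i ∈ Finset.range j, p ^ j * (p+1) ^ j := by
          rw [Finset.sum_const, Finset.card_range, nsmul_eq_mul]
      _ ≤ ∑ i ∈ Finset.range j, (p+1) ^ i * p ^ (j - 1 - i) * (p+1) ^ (j+1) := by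
          apply Finset.sum_le_sum
          intro i hi
          simp only [Finset.mem_range] at hi
          calc p ^ j * (p+1) ^ j = p ^ (j-1-i) * p ^ (i+1) * (p+1) ^ j := by
                rw [← pow_add, show j - 1 - i + (i+1) = j from by omega]
            _ ≤ p ^ (j-1-i) * (p+1) ^ (i+1) * (p+1) ^ j := by gcongr <;> linarith
            _ = (p+1) ^ i * p ^ (j - 1 - i) * (p+1) ^ (j+1) := by ring
  have h1 : (0:ℝ) < p ^ j := by positivity
  have h3 : (0:ℝ) < (p+1) ^ (j+1) := by positivity
  have h4 : (p ^ j)⁻¹ - ((p+1) ^ j)⁻¹ = ((p+1) ^ j - p ^ j) / (p ^ j * (p+1) ^ j) := by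
    field_simp
  rw [h4, ← div_eq_mul_inv, div_le_div_iff₀ h3 (by positivity)]
  linarith [key]

lemma lemC (y : ℝ) (hy : 1 < y) : y⁻¹ < Real.log y - Real.log (y - 1) := by
  have h1 : (0:ℝ) < y - 1 := by linarith
  have h0 : (0:ℝ) < y := by linarith
  have hlog := Real.log_lt_sub_one_of_pos (x := (y-1)/y) (by positivity) (by
    intro h; rw [div_eq_one_iff_eq (by linarith)] at h; linarith)
  rw [Real.log_div (by linarith) (by linarith)] at hlog
  have hx : (y-1)/y - 1 = -y⁻¹ := by field_simp; ring
  rw [hx] at hlog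
  linarith

theorem stmt_16 (a c : ℝ) (n : ℕ) (hn : 0 < n) (t l : ℕ)
    (hna : (n : ℝ) > a) (hac : a > c + 2) (hc : c + 2 ≥ 3)
    (ht2 : 2 ≤ t) (hlt : l ≤ t) (hl : 0 < l) :
    (∑ x ∈ Finset.Icc (⌊a⌋ + 1) (n : ℤ), (x : ℝ) ^ t / ((x : ℝ) - c) ^ l) <
      (∑ i ∈ Finset.range (l - 1),
        (t.choose i : ℝ) * c ^ (t - i) * (a - 1 - c) ^ ((i : ℤ) + 1 - (l : ℤ)) /
          ((l : ℝ) - i - 1)) +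
      (t.choose (l - 1) : ℝ) * c ^ (t + 1 - l) * Real.log n +
      (∑ i ∈ Finset.Icc l t,
        (t.choose i : ℝ) * c ^ (t - i) * ((n : ℝ) + 1 - c) ^ (i + 1 - l) /
          ((i : ℝ) + 1 - l)) := by
  obtain ⟨l', rfl⟩ : ∃ l', l = l' + 1 := ⟨l - 1, by omega⟩
  set m : ℤ := ⌊a⌋ with hm
  have hc1 : (1:ℝ) ≤ c := by linarith
  have hm1 : a - 1 < (m:ℝ) := Int.sub_one_lt_floor a
  have hma : (m:ℝ) ≤ a := Int.floor_le a
  have hmn : m + 1 ≤ (n:ℤ) := by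
    have : m < (n:ℤ) := Int.floor_lt.2 (by push_cast; linarith)
    omega
  have hbig : ∀ x : ℤ, m + 1 ≤ x → (2:ℝ) < (x:ℝ) - c := by
    intro x hx
    have : ((m:ℤ):ℝ) + 1 ≤ (x:ℝ) := by exact_mod_cast (by exact_mod_cast hx : ((m+1:ℤ):ℝ) ≤ (x:ℝ))
    linarith
  have hac1 : (1:ℝ) < a - 1 - c := by linarith
  -- Step 1 : rewrite LHS
  have hLHS : (∑ x ∈ Finset.Icc (m + 1) (n : ℤ), (x : ℝ) ^ t / ((x : ℝ) - c) ^ (l'+1))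
      = ∑ i ∈ Finset.range (t+1), (t.choose i : ℝ) * c ^ (t-i) *
          ∑ x ∈ Finset.Icc (m+1) (n:ℤ), ((x:ℝ)-c)^i / ((x:ℝ)-c)^(l'+1) := by
    have h1 : ∀ x ∈ Finset.Icc (m+1) (n:ℤ), (x : ℝ) ^ t / ((x : ℝ) - c) ^ (l'+1)
        = ∑ i ∈ Finset.range (t+1), (t.choose i : ℝ) * c ^ (t-i) * (((x:ℝ)-c)^i / ((x:ℝ)-c)^(l'+1)) := by
      intro x hx
      have hx' := add_pow ((x:ℝ)-c) c t
      rw [sub_add_cancel] at hx'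
      rw [hx', Finset.sum_div]
      exact Finset.sum_congr rfl (fun i _ => by ring)
    rw [Finset.sum_congr rfl h1, Finset.sum_comm]
    exact Finset.sum_congr rfl (fun i _ => (Finset.mul_sum _ _ _).symm)
  rw [hLHS]
  -- Step 2 : split index set
  rw [Finset.range_eq_Ico (t+1),
    ← Finset.sum_Ico_consecutive _ (Nat.zero_le (l'+1)) (by omega : l'+1 ≤ t+1),
    (Finset.range_eq_Ico (l'+1)).symm,
    Finset.sum_range_succ,
    show Finset.Ico (l'+1) (t+1) = Finset.Icc (l'+1) t from Finset.Ico_add_one_right_eq_Icc (l'+1) t]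
  simp only [Nat.add_sub_cancel]
  -- cast helpers
  have hnm' : (m:ℝ) + 1 ≤ (n:ℝ) := by exact_mod_cast (by exact_mod_cast hmn : ((m+1:ℤ):ℝ) ≤ ((n:ℤ):ℝ))
  have hnbig : (2:ℝ) < (n:ℝ) - c := by
    have := hbig (n:ℤ) hmn
    push_cast at this
    exact this
  -- middle bound
  have hSmid : (∑ x ∈ Finset.Icc (m+1) (n:ℤ), ((x:ℝ)-c)^l' / ((x:ℝ)-c)^(l'+1)) < Real.log n := by
    have hptw : ∀ x : ℤ, m + 1 ≤ x → x ≤ (n:ℤ) →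
        (fun x : ℤ => ((x:ℝ)-c)^l' / ((x:ℝ)-c)^(l'+1)) x ≤
        (fun x : ℤ => Real.log ((x:ℝ)-c)) x - (fun x : ℤ => Real.log ((x:ℝ)-c)) (x-1) := by
      intro x hx1 hx2
      have h2x := hbig x hx1
      have hgx : ((x:ℝ)-c)^l' / ((x:ℝ)-c)^(l'+1) = ((x:ℝ)-c)⁻¹ := by
        rw [pow_succ, div_mul_eq_div_div, div_self (by positivity), one_div]
      simp only
      rw [hgx]
      have hC := lemC ((x:ℝ)-c) (by linarith)
      push_cast
      rw [show (x:ℝ) - 1 - c = ((x:ℝ)-c) - 1 from by ring]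
      linarith
    have hstep := sum_le_tele _ _ m n (by omega) hptw
    push_cast at hstep
    refine hstep.trans_lt ?_
    have hlog1 : Real.log ((n:ℝ)-c) ≤ Real.log n := by
      apply Real.log_le_log (by linarith)
      linarith
    have hlog2 : 0 < Real.log ((m:ℝ)-c) := Real.log_pos (by linarith)
    linarith
  -- lower-range bound
  have hbound1 : ∀ i ∈ Finset.range l',
      (t.choose i : ℝ) * c ^ (t - i) *
        (∑ x ∈ Finset.Icc (m+1) (n:ℤ), ((x:ℝ)-c)^i / ((x:ℝ)-c)^(l'+1))
      ≤ (t.choose i : ℝ) * c ^ (t - i) * (a - 1 - c) ^ ((i:ℤ) + 1 - ((l'+1 : ℕ):ℤ)) /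
          (((l'+1 : ℕ):ℝ) - (i:ℝ) - 1) := by
    intro i hi
    simp only [Finset.mem_range] at hi
    set j := l' - i with hj
    have hj1 : 1 ≤ j := by omega
    have hij : i + (j+1) = l' + 1 := by omega
    have hjpos : (0:ℝ) < (j:ℝ) := by exact_mod_cast Nat.pos_of_ne_zero (by omega)
    have hS : (∑ x ∈ Finset.Icc (m+1) (n:ℤ), ((x:ℝ)-c)^i / ((x:ℝ)-c)^(l'+1))
        ≤ ((a - 1 - c)^j)⁻¹ / (j:ℝ) := by
      have hptw : ∀ x : ℤ, m + 1 ≤ x → x ≤ (n:ℤ) →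
          (fun x : ℤ => ((x:ℝ)-c)^i / ((x:ℝ)-c)^(l'+1)) x ≤
          (fun x : ℤ => -(((x:ℝ)-c)^j)⁻¹ / (j:ℝ)) x - (fun x : ℤ => -(((x:ℝ)-c)^j)⁻¹ / (j:ℝ)) (x-1) := by
        intro x hx1 hx2
        have h2x := hbig x hx1
        have hp : 0 < (x:ℝ) - 1 - c := by linarith
        have hB := lemB ((x:ℝ)-1-c) hp j
        rw [show (x:ℝ)-1-c+1 = (x:ℝ)-c from by ring] at hB
        have hgx : ((x:ℝ)-c)^i / ((x:ℝ)-c)^(l'+1) = (((x:ℝ)-c)^(j+1))⁻¹ := by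
          rw [show l'+1 = i + (j+1) from hij.symm, pow_add, div_mul_eq_div_div,
            div_self (by positivity), one_div]
        simp only
        rw [hgx]
        push_cast
        rw [show -(((x:ℝ)-c)^j)⁻¹/(j:ℝ) - (-(((x:ℝ)-1-c)^j)⁻¹/(j:ℝ))
            = ((((x:ℝ)-1-c)^j)⁻¹ - (((x:ℝ)-c)^j)⁻¹) / (j:ℝ) from by ring,
          le_div_iff₀ hjpos]
        calc (((x:ℝ)-c)^(j+1))⁻¹ * (j:ℝ) = (j:ℝ) * (((x:ℝ)-c)^(j+1))⁻¹ := by ring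
          _ ≤ _ := hB
      have hstep := sum_le_tele _ _ m n (by omega) hptw
      push_cast at hstep
      refine hstep.trans ?_
      have h2 : (a-1-c)^j ≤ ((m:ℝ)-c)^j := by
        apply pow_le_pow_left₀ (by linarith) (by linarith)
      have h3 : (((m:ℝ)-c)^j)⁻¹ ≤ ((a-1-c)^j)⁻¹ := by
        apply inv_anti₀ (by positivity) h2
      have h5 : (0:ℝ) ≤ ((((n:ℝ))-c)^j)⁻¹ := by positivity
      have key2 : (((m:ℝ)-c)^j)⁻¹ - ((((n:ℝ))-c)^j)⁻¹ ≤ ((a-1-c)^j)⁻¹ := by linarith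
      calc -((((n:ℝ))-c)^j)⁻¹/(j:ℝ) - -((((m:ℝ))-c)^j)⁻¹/(j:ℝ)
          = ((((m:ℝ)-c)^j)⁻¹ - ((((n:ℝ))-c)^j)⁻¹)/(j:ℝ) := by ring
        _ ≤ ((a-1-c)^j)⁻¹/(j:ℝ) := by gcongr
    have e1 : ((i:ℤ) + 1 - ((l'+1:ℕ):ℤ)) = -(j:ℤ) := by push_cast; omega
    have e2 : (((l'+1:ℕ)):ℝ) - (i:ℝ) - 1 = (j:ℝ) := by
      rw [hj, Nat.cast_sub hi.le]; push_cast; ring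
    rw [e1, zpow_neg, zpow_natCast, e2, mul_div_assoc]
    exact mul_le_mul_of_nonneg_left hS (by positivity)
  -- upper-range bound
  have hbound3 : ∀ i ∈ Finset.Icc (l'+1) t,
      (t.choose i : ℝ) * c ^ (t - i) *
        (∑ x ∈ Finset.Icc (m+1) (n:ℤ), ((x:ℝ)-c)^i / ((x:ℝ)-c)^(l'+1))
      ≤ (t.choose i : ℝ) * c ^ (t - i) * ((n:ℝ) + 1 - c) ^ (i + 1 - (l'+1)) /
          ((i:ℝ) + 1 - ((l'+1:ℕ):ℝ)) := by
    intro i hi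
    simp only [Finset.mem_Icc] at hi
    set k := i - (l'+1) with hk
    have hik : i = l' + 1 + k := by omega
    have hkpos : (0:ℝ) < (k:ℝ)+1 := by positivity
    have hS : (∑ x ∈ Finset.Icc (m+1) (n:ℤ), ((x:ℝ)-c)^i / ((x:ℝ)-c)^(l'+1))
        ≤ ((n:ℝ)+1-c)^(k+1) / ((k:ℝ)+1) := by
      have hptw : ∀ x : ℤ, m + 1 ≤ x → x ≤ (n:ℤ) →
          (fun x : ℤ => ((x:ℝ)-c)^i / ((x:ℝ)-c)^(l'+1)) x ≤
          (fun x : ℤ => ((x:ℝ)+1-c)^(k+1) / ((k:ℝ)+1)) x - (fun x : ℤ => ((x:ℝ)+1-c)^(k+1) / ((k:ℝ)+1)) (x-1) := by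
        intro x hx1 hx2
        have h2x := hbig x hx1
        have hp : 0 < (x:ℝ) - c := by linarith
        have hA := lemA ((x:ℝ)-c) hp k
        rw [show (x:ℝ)-c+1 = (x:ℝ)+1-c from by ring] at hA
        have hgx : ((x:ℝ)-c)^i / ((x:ℝ)-c)^(l'+1) = ((x:ℝ)-c)^k := by
          rw [hik, pow_add, mul_comm, mul_div_assoc, div_self (by positivity), mul_one]
        simp only
        rw [hgx]
        push_cast
        rw [show (x:ℝ)-1+1-c = (x:ℝ)-c from by ring,
          show ((x:ℝ)+1-c)^(k+1)/((k:ℝ)+1) - ((x:ℝ)-c)^(k+1)/((k:ℝ)+1)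
            = (((x:ℝ)+1-c)^(k+1) - ((x:ℝ)-c)^(k+1))/((k:ℝ)+1) from by ring,
          le_div_iff₀ hkpos]
        linarith [hA]
      have hstep := sum_le_tele _ _ m n (by omega) hptw
      push_cast at hstep
      refine hstep.trans ?_
      have h7 : (0:ℝ) ≤ ((m:ℝ)+1-c)^(k+1)/((k:ℝ)+1) := by
        apply div_nonneg _ (by positivity)
        apply pow_nonneg
        linarith
      linarith
    have e1 : i + 1 - (l'+1) = k + 1 := by omega
    have e2 : (i:ℝ) + 1 - ((l'+1:ℕ):ℝ) = (k:ℝ)+1 := by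
      rw [hik]; push_cast; ring
    rw [e1, e2, mul_div_assoc]
    exact mul_le_mul_of_nonneg_left hS (by positivity)
  have hA := Finset.sum_le_sum hbound1
  have hC := Finset.sum_le_sum hbound3
  have hB : (t.choose l' : ℝ) * c ^ (t - l') *
      (∑ x ∈ Finset.Icc (m+1) (n:ℤ), ((x:ℝ)-c)^l' / ((x:ℝ)-c)^(l'+1))
      < (t.choose l' : ℝ) * c ^ (t + 1 - (l'+1)) * Real.log n := by
    rw [show t + 1 - (l'+1) = t - l' from by omega]
    have hcp : (0:ℝ) < (t.choose l' : ℝ) * c ^ (t - l') := by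
      apply mul_pos
      · exact_mod_cast Nat.choose_pos (by omega)
      · positivity
    calc (t.choose l' : ℝ) * c ^ (t - l') * _
        < (t.choose l' : ℝ) * c ^ (t - l') * Real.log n := by
          exact mul_lt_mul_of_pos_left hSmid hcp
      _ = _ := rfl
  exact add_lt_add_of_lt_of_le (add_lt_add_of_le_of_lt hA hB) hC
end

section
/- Let g be a permutation of a finite set Ω of size n, let Σ(g) ⊆ Ω be a union of g-cycles whose lengths do not divide a fixed positive integer N, with u = |Σ(g)| ≥ 2, and let k₀ be an integer with 1 ≤ k₀ ≤ u. Then the number σ of k₀-element subsets γ' of Σ(g) whose orbit length under ⟨g⟩ (acting on k₀-subsets) divides N satisfies: σ = 0 if k₀ = 1; σ ≤ 1 if k₀ = u; and σ ≤ C(u, k₀)/(u-1) if 1 < k₀ < u. -/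
open Function Finset

lemma aux_facts_18 {α : Type*} [DecidableEq α] {γ δ : Finset α} {x y : α}
    (hx : γ \ δ = {x}) (hy : δ \ γ = {y}) :
    x ∈ γ ∧ x ∉ δ ∧ y ∈ δ ∧ y ∉ γ ∧ (∀ z ∈ γ, z ≠ x → z ∈ δ) ∧ (∀ z ∈ δ, z ≠ y → z ∈ γ) := by
  have hx' : x ∈ γ \ δ := hx ▸ Finset.mem_singleton_self x
  have hy' : y ∈ δ \ γ := hy ▸ Finset.mem_singleton_self y
  rw [Finset.mem_sdiff] at hx' hy'
  refine ⟨hx'.1, hx'.2, hy'.1, hy'.2, ?_, ?_⟩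
  · intro z hz hzx
    by_contra h
    exact hzx (Finset.mem_singleton.1 (hx ▸ Finset.mem_sdiff.2 ⟨hz, h⟩))
  · intro z hz hzy
    by_contra h
    exact hzy (Finset.mem_singleton.1 (hy ▸ Finset.mem_sdiff.2 ⟨hz, h⟩))

lemma aux_pairdist_18 {α : Type*} [DecidableEq α] {f : α → α} (hfinj : Function.Injective f)
    {S γ₁ γ₂ δ : Finset α} {x₁ y₁ x₂ y₂ : α}
    (hnofix : ∀ a ∈ S, f a ≠ a)
    (h1S : γ₁ ⊆ S) (h2S : γ₂ ⊆ S) (hδS : δ ⊆ S)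
    (hi1 : ∀ a, a ∈ γ₁ ↔ f a ∈ γ₁) (hi2 : ∀ a, a ∈ γ₂ ↔ f a ∈ γ₂)
    (hx1 : γ₁ \ δ = {x₁}) (hy1 : δ \ γ₁ = {y₁})
    (hx2 : γ₂ \ δ = {x₂}) (hy2 : δ \ γ₂ = {y₂})
    (hne : γ₁ ≠ γ₂) : x₁ ≠ x₂ ∧ y₁ ≠ y₂ := by
  obtain ⟨hx1γ, hx1δ, hy1δ, hy1γ, hmem1, hmem1'⟩ := aux_facts_18 hx1 hy1
  obtain ⟨hx2γ, hx2δ, hy2δ, hy2γ, hmem2, hmem2'⟩ := aux_facts_18 hx2 hy2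
  have hnotboth : ¬ (x₁ = x₂ ∧ y₁ = y₂) := by
    rintro ⟨rfl, rfl⟩
    apply hne
    ext z
    constructor
    · intro hz
      by_cases hzx : z = x₁
      · exact hzx ▸ hx2γ
      · exact hmem2' z (hmem1 z hz hzx) (fun h => hy1γ (h ▸ hz))
    · intro hz
      by_cases hzx : z = x₁
      · exact hzx ▸ hx1γ
      · exact hmem1' z (hmem2 z hz hzx) (fun h => hy2γ (h ▸ hz))
  constructor
  · intro hxx
    have hyy : y₁ ≠ y₂ := fun h => hnotboth ⟨hxx, h⟩
    have hfy1 : f y₁ = x₂ := by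
      have hf1 : f y₁ ∈ γ₂ := (hi2 y₁).1 (hmem2' y₁ hy1δ hyy)
      have hf2 : f y₁ ∉ γ₁ := fun h => hy1γ ((hi1 y₁).2 h)
      by_contra hc
      have hd : f y₁ ∈ δ := hmem2 _ hf1 hc
      by_cases h : f y₁ = y₁
      · exact hnofix y₁ (hδS hy1δ) h
      · exact hf2 (hmem1' _ hd h)
    have hfy2 : f y₂ = x₁ := by
      have hf1 : f y₂ ∈ γ₁ := (hi1 y₂).1 (hmem1' y₂ hy2δ (Ne.symm hyy))
      have hf2 : f y₂ ∉ γ₂ := fun h => hy2γ ((hi2 y₂).2 h)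
      by_contra hc
      have hd : f y₂ ∈ δ := hmem1 _ hf1 hc
      by_cases h : f y₂ = y₂
      · exact hnofix y₂ (hδS hy2δ) h
      · exact hf2 (hmem2' _ hd h)
    exact hyy (hfinj (by rw [hfy1, hfy2, hxx]))
  · intro hyy
    have hxx : x₁ ≠ x₂ := fun h => hnotboth ⟨h, hyy⟩
    have hfx1 : f x₁ = y₂ := by
      have hf1 : f x₁ ∈ γ₁ := (hi1 x₁).1 hx1γ
      have hx1γ2 : x₁ ∉ γ₂ := by
        intro h
        by_cases h' : x₁ = x₂
        · exact hxx h'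
        · exact hx1δ (hmem2 x₁ h h')
      have hf2 : f x₁ ∉ γ₂ := fun h => hx1γ2 ((hi2 x₁).2 h)
      have hfδ : f x₁ ∈ δ := by
        by_cases h : f x₁ = x₁
        · exact absurd h (hnofix x₁ (h1S hx1γ))
        · exact hmem1 _ hf1 h
      by_contra hc
      exact hf2 (hmem2' _ hfδ hc)
    have hfx2 : f x₂ = y₁ := by
      have hf1 : f x₂ ∈ γ₂ := (hi2 x₂).1 hx2γ
      have hx2γ1 : x₂ ∉ γ₁ := by
        intro h
        by_cases h' : x₂ = x₁
        · exact hxx h'.symm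
        · exact hx2δ (hmem1 x₂ h h')
      have hf2 : f x₂ ∉ γ₁ := fun h => hx2γ1 ((hi1 x₂).2 h)
      have hfδ : f x₂ ∈ δ := by
        by_cases h : f x₂ = x₂
        · exact absurd h (hnofix x₂ (h2S hx2γ))
        · exact hmem2 _ hf1 h
      by_contra hc
      exact hf2 (hmem1' _ hfδ hc)
    exact hxx (hfinj (by rw [hfx1, hfx2, hyy]))

lemma aux_three_18 {α : Type*} [DecidableEq α] {f : α → α} (hfinj : Function.Injective f)
    {S γ₁ γ₂ γ₃ δ : Finset α} {x₁ y₁ x₂ y₂ x₃ y₃ : α}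
    (hnofix : ∀ a ∈ S, f a ≠ a)
    (h1S : γ₁ ⊆ S) (h2S : γ₂ ⊆ S) (h3S : γ₃ ⊆ S) (hδS : δ ⊆ S)
    (hi1 : ∀ a, a ∈ γ₁ ↔ f a ∈ γ₁) (hi2 : ∀ a, a ∈ γ₂ ↔ f a ∈ γ₂)
    (hi3 : ∀ a, a ∈ γ₃ ↔ f a ∈ γ₃)
    (hx1 : γ₁ \ δ = {x₁}) (hy1 : δ \ γ₁ = {y₁})
    (hx2 : γ₂ \ δ = {x₂}) (hy2 : δ \ γ₂ = {y₂})
    (hx3 : γ₃ \ δ = {x₃}) (hy3 : δ \ γ₃ = {y₃})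
    (h12 : γ₁ ≠ γ₂) (h13 : γ₁ ≠ γ₃) (h23 : γ₂ ≠ γ₃) : False := by
  obtain ⟨hx1γ, hx1δ, hy1δ, hy1γ, hmem1, hmem1'⟩ := aux_facts_18 hx1 hy1
  obtain ⟨hx2γ, hx2δ, hy2δ, hy2γ, hmem2, hmem2'⟩ := aux_facts_18 hx2 hy2
  obtain ⟨hx3γ, hx3δ, hy3δ, hy3γ, hmem3, hmem3'⟩ := aux_facts_18 hx3 hy3
  obtain ⟨hx12, -⟩ := aux_pairdist_18 hfinj hnofix h1S h2S hδS hi1 hi2 hx1 hy1 hx2 hy2 h12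
  obtain ⟨hx13, -⟩ := aux_pairdist_18 hfinj hnofix h1S h3S hδS hi1 hi3 hx1 hy1 hx3 hy3 h13
  obtain ⟨-, hy23⟩ := aux_pairdist_18 hfinj hnofix h2S h3S hδS hi2 hi3 hx2 hy2 hx3 hy3 h23
  have hc1 : f x₁ ∈ γ₁ := (hi1 x₁).1 hx1γ
  have hcx : f x₁ ≠ x₁ := hnofix x₁ (h1S hx1γ)
  have hcδ : f x₁ ∈ δ := hmem1 _ hc1 hcx
  have hcy2 : f x₁ = y₂ := by
    have hx1γ2 : x₁ ∉ γ₂ := by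
      intro h
      by_cases h' : x₁ = x₂
      · exact hx12 h'
      · exact hx1δ (hmem2 x₁ h h')
    have : f x₁ ∉ γ₂ := fun h => hx1γ2 ((hi2 x₁).2 h)
    by_contra hc
    exact this (hmem2' _ hcδ hc)
  have hcy3 : f x₁ = y₃ := by
    have hx1γ3 : x₁ ∉ γ₃ := by
      intro h
      by_cases h' : x₁ = x₃
      · exact hx13 h'
      · exact hx1δ (hmem3 x₁ h h')
    have : f x₁ ∉ γ₃ := fun h => hx1γ3 ((hi3 x₁).2 h)
    by_contra hc
    exact this (hmem3' _ hcδ hc)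
  exact hy23 (hcy2 ▸ hcy3)


theorem stmt_18 {α : Type*} [Fintype α] [DecidableEq α]
    (g : Equiv.Perm α) (N : ℕ) (hN : 0 < N) (S : Finset α)
    (hinv : ∀ a ∈ S, g a ∈ S)
    (hcycles : ∀ a ∈ S, ¬ (Function.minimalPeriod g a ∣ N))
    (u k₀ : ℕ) (hu : S.card = u) (hu2 : 2 ≤ u)
    (hk₀ : 1 ≤ k₀) (hk₀u : k₀ ≤ u) :
    (k₀ = 1 →
      ((S.powersetCard k₀).filter
        (fun γ' => Function.minimalPeriod (fun s : Finset α => s.image g) γ' ∣ N)).card = 0) ∧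
    (k₀ = u →
      ((S.powersetCard k₀).filter
        (fun γ' => Function.minimalPeriod (fun s : Finset α => s.image g) γ' ∣ N)).card ≤ 1) ∧
    (1 < k₀ → k₀ < u →
      ((((S.powersetCard k₀).filter
        (fun γ' => Function.minimalPeriod (fun s : Finset α => s.image g) γ' ∣ N)).card : ℝ) ≤
        (u.choose k₀ : ℝ) / ((u : ℝ) - 1))) := by
  classical
  set f : α → α := (⇑g)^[N] with hf
  have hfinj : Function.Injective f := g.injective.iterate N
  have hiter : ∀ n (s : Finset α), (fun s : Finset α => s.image g)^[n] s = s.image ((⇑g)^[n]) := by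
    intro n
    induction n with
    | zero => simp
    | succ n ih =>
        intro s
        rw [Function.iterate_succ_apply, ih, Finset.image_image, ← Function.iterate_succ]
  -- invariance characterization
  have hinv_iff : ∀ γ : Finset α,
      (Function.minimalPeriod (fun s : Finset α => s.image g) γ ∣ N) ↔ γ.image f = γ := by
    intro γ
    constructor
    · intro h
      have h2 : IsPeriodicPt (fun s : Finset α => s.image g) N γ :=
        (isPeriodicPt_minimalPeriod _ γ).trans_dvd h
      have h3 : (fun s : Finset α => s.image g)^[N] γ = γ := h2
      rwa [hiter] at h3
    · intro h
      have h2 : IsPeriodicPt (fun s : Finset α => s.image g) N γ := by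
        show (fun s : Finset α => s.image g)^[N] γ = γ
        rwa [hiter]
      exact h2.minimalPeriod_dvd
  -- f has no fixed points on S
  have hnofix : ∀ a ∈ S, f a ≠ a := by
    intro a ha hfa
    exact hcycles a ha (Function.IsPeriodicPt.minimalPeriod_dvd (hfa : IsPeriodicPt (⇑g) N a))
  -- f maps S into S
  have hfS : ∀ a ∈ S, f a ∈ S := by
    have : ∀ (n : ℕ) (a : α), a ∈ S → (⇑g)^[n] a ∈ S := by
      intro n
      induction n with
      | zero => intro a ha; simpa using ha
      | succ n ih =>
          intro a ha
          rw [Function.iterate_succ_apply']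
          exact hinv _ (ih a ha)
    exact fun a ha => this N a ha
  -- membership transfer for invariant sets
  have hmem : ∀ {γ : Finset α}, γ.image f = γ → ∀ a : α, (a ∈ γ ↔ f a ∈ γ) := by
    intro γ hγ a
    constructor
    · intro ha
      rw [← hγ]
      exact Finset.mem_image_of_mem f ha
    · intro ha
      rw [← hγ] at ha
      obtain ⟨b, hb, hba⟩ := Finset.mem_image.1 ha
      rwa [← hfinj hba]
  -- rewrite the filter predicate
  have key : ((S.powersetCard k₀).filter
      (fun γ' => Function.minimalPeriod (fun s : Finset α => s.image g) γ' ∣ N)) =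
      ((S.powersetCard k₀).filter (fun γ' => γ'.image f = γ')) :=
    Finset.filter_congr (fun γ _ => hinv_iff γ)
  set I : Finset (Finset α) := (S.powersetCard k₀).filter (fun γ' => γ'.image f = γ') with hI
  -- no invariant subsets of size 1 or u-1
  have hempty : ∀ γ ∈ I, 2 ≤ γ.card ∧ γ.card ≤ u - 2 ∨ γ = S := by
    intro γ hγ
    rw [hI, Finset.mem_filter, Finset.mem_powersetCard] at hγ
    obtain ⟨⟨hsub, hcard⟩, hginv⟩ := hγ
    by_cases hγS : γ = S
    · right; exact hγS
    left
    constructor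
    · -- γ nonempty (card = k₀ ≥ 1), so it contains a and f a, distinct
      have hne : γ.Nonempty := by
        rw [← Finset.card_pos, hcard]; omega
      obtain ⟨a, ha⟩ := hne
      have hfa : f a ∈ γ := (hmem hginv a).1 ha
      have : f a ≠ a := hnofix a (hsub ha)
      exact Finset.one_lt_card_iff.2 ⟨f a, a, hfa, ha, this⟩
    · -- the complement in S is invariant and nonempty, so has size ≥ 2
      have hcomp : ∀ a, a ∈ S \ γ → f a ∈ S \ γ := by
        intro a ha
        rw [Finset.mem_sdiff] at ha ⊢
        exact ⟨hfS a ha.1, fun h => ha.2 ((hmem hginv a).2 h)⟩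
      have hnec : (S \ γ).Nonempty := by
        rw [Finset.sdiff_nonempty]
        intro hSsub
        exact hγS (Finset.Subset.antisymm hsub hSsub)
      obtain ⟨a, ha⟩ := hnec
      have h2 : 2 ≤ (S \ γ).card := by
        have hfa : f a ∈ S \ γ := hcomp a ha
        have : f a ≠ a := hnofix a ((Finset.mem_sdiff.1 ha).1)
        exact Finset.one_lt_card_iff.2 ⟨f a, a, hfa, ha, this⟩
      have hcs : (S \ γ).card = u - γ.card := by
        rw [Finset.card_sdiff_of_subset hsub, hu]
      omega
  refine ⟨?_, ?_, ?_⟩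
  · -- k₀ = 1
    intro hk1
    rw [key, Finset.card_eq_zero, Finset.eq_empty_iff_forall_notMem]
    intro γ hγ
    have hc : γ.card = k₀ := (Finset.mem_powersetCard.1 (Finset.mem_filter.1 hγ).1).2
    rcases hempty γ hγ with h | h
    · omega
    · rw [h, hu] at hc; omega
  · -- k₀ = u
    intro hku
    subst hku
    rw [← hu, Finset.powersetCard_self]
    exact (Finset.card_filter_le _ _).trans (by simp)
  · -- 1 < k₀ < u
    intro hk1 hku
    rw [key]
    by_cases hk2 : k₀ = u - 1
    · -- no invariant subsets of size u - 1
      have : I = ∅ := by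
        rw [Finset.eq_empty_iff_forall_notMem]
        intro γ hγ
        have hc : γ.card = k₀ := (Finset.mem_powersetCard.1 (Finset.mem_filter.1 hγ).1).2
        rcases hempty γ hγ with h | h
        · omega
        · rw [h, hu] at hc; omega
      rw [this]
      simp only [Finset.card_empty, Nat.cast_zero]
      have h1 : (0:ℝ) < (u:ℝ) - 1 := by
        have : (2:ℝ) ≤ (u:ℝ) := by exact_mod_cast hu2
        linarith
      positivity
    · -- main case: 2 ≤ k₀ ≤ u - 2
      have hk2' : k₀ ≤ u - 2 := by omega
      set r : Finset α → Finset α → Prop := fun γ δ => (γ \ δ).card = 1 ∧ (δ \ γ).card = 1 with hr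
      set J : Finset (Finset α) := (S.powersetCard k₀).filter (fun γ' => ¬ γ'.image f = γ') with hJ
      have hIfacts : ∀ γ ∈ I, γ ⊆ S ∧ γ.card = k₀ ∧ γ.image f = γ := by
        intro γ hγ
        rw [hI, Finset.mem_filter, Finset.mem_powersetCard] at hγ
        exact ⟨hγ.1.1, hγ.1.2, hγ.2⟩
      have h₁ : ∀ γ ∈ I, k₀ * (u - k₀) ≤ (J.bipartiteAbove r γ).card := by
        intro γ hγ
        obtain ⟨hsub, hcard, hginv⟩ := hIfacts γ hγ
        have hcardp : (γ ×ˢ (S \ γ)).card = k₀ * (u - k₀) := by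
          rw [Finset.card_product, Finset.card_sdiff_of_subset hsub, hcard, hu]
        rw [← hcardp]
        apply Finset.card_le_card_of_injOn (fun p => insert p.2 (γ.erase p.1))
        · rintro ⟨x, y⟩ hp
          rw [Finset.mem_coe, Finset.mem_product, Finset.mem_sdiff] at hp
          have hx := hp.1
          have hyS := hp.2.1
          have hyγ := hp.2.2
          have hxy : x ≠ y := fun h => hyγ (h ▸ hx)
          have e1 : γ \ (insert y (γ.erase x)) = {x} := by
            ext z
            simp only [mem_sdiff, mem_insert, mem_erase, mem_singleton, not_or, not_and]
            constructor
            · rintro ⟨hz, _, h2⟩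
              by_contra hzx
              exact (h2 hzx) hz
            · rintro rfl
              exact ⟨hx, hxy, fun h => absurd rfl h⟩
          have e2 : (insert y (γ.erase x)) \ γ = {y} := by
            ext z
            simp only [mem_sdiff, mem_insert, mem_erase, mem_singleton]
            constructor
            · rintro ⟨hz | ⟨-, hz⟩, hzγ⟩
              · exact hz
              · exact absurd hz hzγ
            · rintro rfl
              exact ⟨Or.inl rfl, hyγ⟩
          rw [Finset.mem_coe, Finset.mem_bipartiteAbove]
          refine ⟨?_, ?_, ?_⟩
          · -- membership in J
            rw [hJ, Finset.mem_filter, Finset.mem_powersetCard]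
            refine ⟨⟨?_, ?_⟩, ?_⟩
            · intro z hz
              rcases Finset.mem_insert.1 hz with rfl | hz
              · exact hyS
              · exact hsub (Finset.mem_of_mem_erase hz)
            · rw [Finset.card_insert_of_notMem (fun h => hyγ (Finset.mem_of_mem_erase h)),
                Finset.card_erase_of_mem hx, hcard]
              omega
            · -- not invariant
              intro hδinv
              have hfx : f x ∈ γ := (hmem hginv x).1 hx
              have hfxx : f x ≠ x := hnofix x (hsub hx)
              have h1 : f x ∈ insert y (γ.erase x) :=
                Finset.mem_insert_of_mem (Finset.mem_erase.2 ⟨hfxx, hfx⟩)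
              have h2 : x ∈ insert y (γ.erase x) := (hmem hδinv x).2 h1
              rcases Finset.mem_insert.1 h2 with h | h
              · exact hxy h
              · exact (Finset.mem_erase.1 h).1 rfl
          · rw [e1, Finset.card_singleton]
          · rw [e2, Finset.card_singleton]
        · -- injectivity
          rintro ⟨x₁, y₁⟩ hp1 ⟨x₂, y₂⟩ hp2 heq
          simp only [Finset.coe_product, Set.mem_prod, Finset.mem_coe, Finset.mem_sdiff] at hp1 hp2
          have hx1 := hp1.1
          have hy1γ := hp1.2.2
          have hx2 := hp2.1
          have hy2γ := hp2.2.2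
          simp only at heq
          have hy12 : y₁ = y₂ := by
            have : y₁ ∈ insert y₂ (γ.erase x₂) := heq ▸ Finset.mem_insert_self y₁ _
            rcases Finset.mem_insert.1 this with h | h
            · exact h
            · exact absurd (Finset.mem_of_mem_erase h) hy1γ
          have hx12 : x₁ = x₂ := by
            have hx2n : x₂ ∉ insert y₂ (γ.erase x₂) := by
              simp only [Finset.mem_insert, Finset.mem_erase, not_or, not_and]
              exact ⟨fun h => hy2γ (h ▸ hx2), fun h => absurd rfl h⟩
            have h3 : x₂ ∉ insert y₁ (γ.erase x₁) := heq ▸ hx2n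
            simp only [Finset.mem_insert, Finset.mem_erase, not_or, not_and] at h3
            by_contra hne
            exact (h3.2 (fun h => hne h.symm)) hx2
          simp [hx12, hy12]
      have h₂ : ∀ δ ∈ J, (I.bipartiteBelow r δ).card ≤ 2 := by
        intro δ hδ
        have hδS : δ ⊆ S := by
          rw [hJ, Finset.mem_filter, Finset.mem_powersetCard] at hδ
          exact hδ.1.1
        by_contra hc
        push_neg at hc
        obtain ⟨γ₁, γ₂, γ₃, hg1, hg2, hg3, h12, h13, h23⟩ := Finset.two_lt_card_iff.1 hc
        rw [Finset.mem_bipartiteBelow] at hg1 hg2 hg3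
        have hγ1I := hg1.1
        have hr1a := hg1.2.1
        have hr1b := hg1.2.2
        have hγ2I := hg2.1
        have hr2a := hg2.2.1
        have hr2b := hg2.2.2
        have hγ3I := hg3.1
        have hr3a := hg3.2.1
        have hr3b := hg3.2.2
        obtain ⟨x₁, hx1⟩ := Finset.card_eq_one.1 hr1a
        obtain ⟨y₁, hy1⟩ := Finset.card_eq_one.1 hr1b
        obtain ⟨x₂, hx2⟩ := Finset.card_eq_one.1 hr2a
        obtain ⟨y₂, hy2⟩ := Finset.card_eq_one.1 hr2b
        obtain ⟨x₃, hx3⟩ := Finset.card_eq_one.1 hr3a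
        obtain ⟨y₃, hy3⟩ := Finset.card_eq_one.1 hr3b
        obtain ⟨h1S, -, hi1⟩ := hIfacts γ₁ hγ1I
        obtain ⟨h2S, -, hi2⟩ := hIfacts γ₂ hγ2I
        obtain ⟨h3S, -, hi3⟩ := hIfacts γ₃ hγ3I
        exact aux_three_18 hfinj hnofix h1S h2S h3S hδS (hmem hi1) (hmem hi2) (hmem hi3)
          hx1 hy1 hx2 hy2 hx3 hy3 h12 h13 h23
      have hcount : I.card * (k₀ * (u - k₀)) ≤ J.card * 2 :=
        Finset.card_mul_le_card_mul r h₁ h₂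
      have hIJ : I.card + J.card = u.choose k₀ := by
        rw [hI, hJ, Finset.card_filter_add_card_filter_not, Finset.card_powersetCard, hu]
      have h2u : 2 * (u - 2) ≤ k₀ * (u - k₀) := by
        obtain ⟨a, rfl⟩ : ∃ a, k₀ = a + 2 := ⟨k₀ - 2, by omega⟩
        obtain ⟨b, hb⟩ : ∃ b, u - (a + 2) = b + 2 := ⟨u - (a + 2) - 2, by omega⟩
        rw [hb, show u - 2 = a + b + 2 by omega]
        have : (a + 2) * (b + 2) = a * b + 2 * a + 2 * b + 4 := by ring
        omega
      have hmono : I.card * (2 * (u - 2)) ≤ J.card * 2 :=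
        le_trans (Nat.mul_le_mul_left _ h2u) hcount
      have h5 : I.card * (u - 2) ≤ J.card := by
        rw [show 2 * (u - 2) = (u - 2) * 2 by ring, ← mul_assoc] at hmono
        exact Nat.le_of_mul_le_mul_right hmono (by norm_num)
      have h6 : I.card * (u - 1) ≤ u.choose k₀ := by
        have he : I.card * (u - 1) = I.card * (u - 2) + I.card := by
          rw [show u - 1 = (u - 2) + 1 by omega, mul_add, mul_one]
        omega
      have hpos : (0:ℝ) < (u:ℝ) - 1 := by
        have : (2:ℝ) ≤ (u:ℝ) := by exact_mod_cast hu2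
        linarith
      rw [le_div_iff₀ hpos]
      have h7 : ((I.card * (u - 1) : ℕ) : ℝ) ≤ (u.choose k₀ : ℝ) := by exact_mod_cast h6
      rw [Nat.cast_mul, Nat.cast_sub (by omega : 1 ≤ u), Nat.cast_one] at h7
      exact h7
end
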